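/- arXiv:2404.10418 — 3 statements merged into one kernel-verified Lean document; each statement's English description precedes it below -/
import Mathlib

section
/- Let f : (ℤ_q)^n → {−1, 1} be a Boolean function of degree at most d, i.e., f̂(u) = 0 whenever |u| > d. Then the number ν(f) of edges {x,y} of H(n,q) with f(x) ≠ f(y) satisfies ν(f) ≤ (d/4)·q^{n+1}. -/
open Finset BigOperators
open scoped Classical

/-- The character `χ_u(x) = ω^{⟨u,x⟩}` on `(ℤ_q)^n`, with `ω = e^{2πi/q}`. -/
noncomputable def chi (q n : ℕ) (u x : Fin n → ZMod q) : ℂ :=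
  Complex.exp (2 * Real.pi * Complex.I * (((∑ i, u i * x i).val : ℕ) : ℂ) / q)

/-- Fourier coefficient `f̂(u) = q^{-n} Σ_x f(x) conj(χ_u(x))`. -/
noncomputable def fhat (q n : ℕ) [NeZero q] (f : (Fin n → ZMod q) → ℂ)
    (u : Fin n → ZMod q) : ℂ :=
  (1 / (q : ℂ) ^ n) * ∑ x, f x * (starRingEnd ℂ) (chi q n u x)

/-- Adjacency operator of the Hamming graph `H(n,q)`. -/
noncomputable def adjOp (q n : ℕ) [NeZero q] (f : (Fin n → ZMod q) → ℂ)
    (x : Fin n → ZMod q) : ℂ :=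
  ∑ y ∈ univ.filter (fun y => hammingDist x y = 1), f y

/-- Twice the number of edges `{x,y}` of `H(n,q)` with `f x ≠ f y`
(the number of ordered such pairs). -/
noncomputable def nuOrd (q n : ℕ) [NeZero q] {α : Type*} (f : (Fin n → ZMod q) → α) : ℕ :=
  (univ.filter (fun p : (Fin n → ZMod q) × (Fin n → ZMod q) =>
    hammingDist p.1 p.2 = 1 ∧ f p.1 ≠ f p.2)).card

/-- Coordinate `i` is relevant for `f`. -/
def Relevant {q n : ℕ} {α : Type*} (f : (Fin n → ZMod q) → α) (i : Fin n) : Prop :=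
  ∃ x y : Fin n → ZMod q, (∀ j, j ≠ i → x j = y j) ∧ f x ≠ f y

/-- The function `f_{i,a,b}` on `(ℤ_q)^n` obtained from `f` on `(ℤ_q)^{n+1}`. -/
noncomputable def restrictDiff {q n : ℕ} (f : (Fin (n + 1) → ZMod q) → ℂ)
    (i : Fin (n + 1)) (a b : ZMod q) : (Fin n → ZMod q) → ℂ :=
  fun y => f (i.insertNth a y) - f (i.insertNth b y)

/-- The size of the support of `g`. -/
noncomputable def suppCard (q n : ℕ) [NeZero q] (g : (Fin n → ZMod q) → ℂ) : ℕ :=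
  (univ.filter (fun y => g y ≠ 0)).card

set_option linter.unusedSectionVars false

section Aux

lemma chi_eq (q n : ℕ) [NeZero q] (u x : Fin n → ZMod q) :
    chi q n u x = ZMod.stdAddChar (∑ i, u i * x i) := by
  rw [ZMod.stdAddChar_apply, ZMod.toCircle_apply, chi]

lemma addChar_sum {ι A M : Type*} [AddCommMonoid A] [CommMonoid M] (ψ : AddChar A M)
    (s : Finset ι) (g : ι → A) : ψ (∑ i ∈ s, g i) = ∏ i ∈ s, ψ (g i) := by
  classical
  induction s using Finset.cons_induction with
  | empty => simp
  | cons i s hi ih =>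
    rw [Finset.sum_cons, Finset.prod_cons, AddChar.map_add_eq_mul, ih]

lemma chi_prod (q n : ℕ) [NeZero q] (u x : Fin n → ZMod q) :
    chi q n u x = ∏ i, ZMod.stdAddChar (u i * x i) := by
  rw [chi_eq]; exact addChar_sum _ _ _

lemma conj_stdAddChar (q : ℕ) [NeZero q] (t : ZMod q) :
    (starRingEnd ℂ) (ZMod.stdAddChar t) = ZMod.stdAddChar (-t) := by
  rw [ZMod.stdAddChar_apply, ZMod.stdAddChar_apply, ← Circle.coe_inv_eq_conj,
    ← AddChar.map_neg_eq_inv]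

lemma sum_stdAddChar_mul (q : ℕ) [NeZero q] (c : ZMod q) :
    ∑ t : ZMod q, ZMod.stdAddChar (c * t) = if c = 0 then (q : ℂ) else 0 := by
  split_ifs with h
  · simp [h, ZMod.card]
  · exact AddChar.sum_eq_zero_of_ne_one (ZMod.isPrimitive_stdAddChar q h)

lemma sum_prod_univ {ι κ : Type*} [Fintype ι] [Fintype κ] [DecidableEq ι] (g : ι → κ → ℂ) :
    ∑ x : ι → κ, ∏ i, g i (x i) = ∏ i, ∑ t, g i t := by
  rw [← Finset.sum_prod_piFinset, Fintype.piFinset_univ]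

lemma sum_chi (q n : ℕ) [NeZero q] (u : Fin n → ZMod q) :
    ∑ x : Fin n → ZMod q, chi q n u x = if u = 0 then ((q : ℂ) ^ n) else 0 := by
  have h1 : ∑ x : Fin n → ZMod q, chi q n u x
      = ∑ x : Fin n → ZMod q, ∏ i, ZMod.stdAddChar (u i * x i) :=
    Finset.sum_congr rfl fun x _ => chi_prod q n u x
  rw [h1, sum_prod_univ (g := fun i t => ZMod.stdAddChar (u i * t))]
  simp_rw [sum_stdAddChar_mul]
  split_ifs with h
  · subst h; simp
  · have h2 : ∃ i, u i ≠ 0 := by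
      by_contra hc; push_neg at hc; exact h (funext hc)
    obtain ⟨i, hi⟩ := h2
    exact Finset.prod_eq_zero (Finset.mem_univ i) (by simp [hi])

lemma sum_chi_conj (q n : ℕ) [NeZero q] (x y : Fin n → ZMod q) :
    ∑ u : Fin n → ZMod q, chi q n u y * (starRingEnd ℂ) (chi q n u x)
      = if x = y then ((q : ℂ) ^ n) else 0 := by
  have h : ∀ u : Fin n → ZMod q,
      chi q n u y * (starRingEnd ℂ) (chi q n u x) = chi q n (y - x) u := by
    intro u
    rw [chi_eq, chi_eq, chi_eq, conj_stdAddChar, ← AddChar.map_add_eq_mul]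
    congr 1
    rw [← sub_eq_add_neg, ← Finset.sum_sub_distrib]
    exact Finset.sum_congr rfl fun i _ => by
      simp only [Pi.sub_apply]; ring
  simp_rw [h]
  rw [sum_chi]
  congr 1
  simp [sub_eq_zero, eq_comm]

/-- Plancherel. -/
lemma plancherel (q n : ℕ) [NeZero q] (f g : (Fin n → ZMod q) → ℂ) :
    (q : ℂ) ^ n * ∑ u, fhat q n f u * (starRingEnd ℂ) (fhat q n g u)
      = ∑ x, f x * (starRingEnd ℂ) (g x) := by
  have hqn : ((q : ℂ) ^ n) ≠ 0 := pow_ne_zero _ (Nat.cast_ne_zero.mpr (NeZero.ne q))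
  have key : ∀ u, fhat q n f u * (starRingEnd ℂ) (fhat q n g u)
      = (1 / (q : ℂ) ^ n) * (1 / (q : ℂ) ^ n)
        * ∑ x, ∑ y, f x * (starRingEnd ℂ) (g y)
            * (chi q n u y * (starRingEnd ℂ) (chi q n u x)) := by
    intro u
    rw [fhat, fhat, map_mul, map_sum]
    have hc : (starRingEnd ℂ) ((1 : ℂ) / (q : ℂ) ^ n) = (1 : ℂ) / (q : ℂ) ^ n := by
      simp
    rw [hc]
    rw [show ((1 / (q : ℂ) ^ n) * ∑ x, f x * (starRingEnd ℂ) (chi q n u x))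
        * ((1 / (q : ℂ) ^ n) * ∑ y, (starRingEnd ℂ) (g y * (starRingEnd ℂ) (chi q n u y)))
        = (1 / (q : ℂ) ^ n) * (1 / (q : ℂ) ^ n)
          * ((∑ x, f x * (starRingEnd ℂ) (chi q n u x))
            * (∑ y, (starRingEnd ℂ) (g y * (starRingEnd ℂ) (chi q n u y)))) from by ring]
    congr 1
    rw [Finset.sum_mul_sum]
    refine Finset.sum_congr rfl fun x _ => Finset.sum_congr rfl fun y _ => ?_
    rw [map_mul, Complex.conj_conj]
    ring
  simp_rw [key]
  rw [← Finset.mul_sum, Finset.sum_comm]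
  have h2 : ∀ x : Fin n → ZMod q,
      ∑ u : Fin n → ZMod q, ∑ y, f x * (starRingEnd ℂ) (g y)
          * (chi q n u y * (starRingEnd ℂ) (chi q n u x))
      = (q : ℂ) ^ n * (f x * (starRingEnd ℂ) (g x)) := by
    intro x
    rw [Finset.sum_comm]
    have h3 : ∀ y, ∑ u : Fin n → ZMod q, f x * (starRingEnd ℂ) (g y)
        * (chi q n u y * (starRingEnd ℂ) (chi q n u x))
        = f x * (starRingEnd ℂ) (g y) * (if x = y then ((q : ℂ) ^ n) else 0) := by
      intro y
      rw [← Finset.mul_sum, sum_chi_conj]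
    simp_rw [h3, mul_ite, mul_zero]
    rw [Finset.sum_ite_eq (univ : Finset (Fin n → ZMod q)) x
      (fun y => f x * (starRingEnd ℂ) (g y) * (q : ℂ) ^ n)]
    simp only [Finset.mem_univ, if_true]
    ring
  simp_rw [h2]
  rw [← Finset.mul_sum]
  field_simp

lemma neighbor_dist_one (q n : ℕ) (x : Fin n → ZMod q) (i : Fin n) (a : ZMod q)
    (ha : a ≠ x i) : hammingDist x (Function.update x i a) = 1 := by
  have h : (univ.filter fun j => x j ≠ Function.update x i a j) = {i} := by
    ext j
    rcases eq_or_ne j i with rfl | hj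
    · simp [Function.update_self, Ne.symm ha]
    · simp [Function.update_of_ne hj, hj]
  simp only [hammingDist]
  rw [show ({i_1 | x i_1 ≠ Function.update x i a i_1} : Finset (Fin n))
    = univ.filter fun j => x j ≠ Function.update x i a j from rfl, h, Finset.card_singleton]

lemma sum_neighbors (q n : ℕ) [NeZero q] (x : Fin n → ZMod q) (g : (Fin n → ZMod q) → ℂ) :
    ∑ y ∈ univ.filter (fun y => hammingDist x y = 1), g y
      = ∑ i : Fin n, ∑ a ∈ univ.filter (fun a : ZMod q => a ≠ x i),
          g (Function.update x i a) := by
  refine Eq.trans ?_ (Finset.sum_sigma (univ : Finset (Fin n))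
      (fun i => univ.filter (fun a : ZMod q => a ≠ x i))
      (f := fun p => g (Function.update x p.1 p.2)))
  refine (Finset.sum_nbij (i := fun p : Σ _ : Fin n, ZMod q => Function.update x p.1 p.2)
    ?_ ?_ ?_ ?_).symm
  · rintro ⟨i, a⟩ hp
    simp only [Finset.mem_sigma, Finset.mem_filter, Finset.mem_univ, true_and] at hp
    simp only [Finset.mem_filter, Finset.mem_univ, true_and]
    exact neighbor_dist_one q n x i a hp
  · rintro ⟨i, a⟩ hp ⟨i', a'⟩ hp' h
    simp only [Finset.coe_sigma, Set.mem_sigma_iff, Finset.mem_coe, Finset.mem_filter,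
      Finset.mem_univ, true_and] at hp hp'
    have hii : i = i' := by
      by_contra hne
      have e1 := congrFun h i
      dsimp only at e1
      rw [Function.update_self, Function.update_of_ne (Ne.symm ?_)] at e1
      · exact hp e1
      · exact fun hc => hne hc.symm
    subst hii
    have e2 := congrFun h i
    dsimp only at e2
    rw [Function.update_self, Function.update_self] at e2
    simp [e2]
  · intro y hy
    simp only [Finset.coe_filter, Set.mem_setOf_eq, Finset.mem_univ, true_and] at hy
    obtain ⟨i, hi⟩ := Finset.card_eq_one.mp hy
    have hiy : x i ≠ y i := by
      have : i ∈ ({i_1 | x i_1 ≠ y i_1} : Finset (Fin n)) := hi ▸ Finset.mem_singleton_self i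
      simpa using this
    have hxy : Function.update x i (y i) = y := by
      funext j
      rcases eq_or_ne j i with rfl | hj
      · rw [Function.update_self]
      · rw [Function.update_of_ne hj]
        by_contra hc
        have : j ∈ ({i_1 | x i_1 ≠ y i_1} : Finset (Fin n)) := by simpa using hc
        rw [hi] at this
        exact hj (Finset.mem_singleton.mp this)
    refine ⟨⟨i, y i⟩, ?_, hxy⟩
    simp only [Finset.coe_sigma, Set.mem_sigma_iff, Finset.mem_coe, Finset.mem_filter,
      Finset.mem_univ, true_and]
    exact Ne.symm hiy
  · intro p _; rfl

/-- Eigenvalue of the adjacency operator on `chi u`. -/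
lemma adj_chi (q n : ℕ) [NeZero q] (u x : Fin n → ZMod q) :
    ∑ y ∈ univ.filter (fun y => hammingDist x y = 1), chi q n u y
      = ((n : ℂ) * ((q : ℂ) - 1) - (q : ℂ) * (hammingNorm u : ℂ)) * chi q n u x := by
  rw [sum_neighbors]
  have hupdate : ∀ (i : Fin n) (a : ZMod q),
      chi q n u (Function.update x i a)
        = chi q n u x * ZMod.stdAddChar (u i * (a - x i)) := by
    intro i a
    rw [chi_eq, chi_eq, ← AddChar.map_add_eq_mul]
    congr 1
    have hfun : (fun j => u j * Function.update x i a j)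
        = Function.update (fun j => u j * x j) i (u i * a) := by
      funext j
      rcases eq_or_ne j i with rfl | hj
      · rw [Function.update_self, Function.update_self]
      · rw [Function.update_of_ne hj, Function.update_of_ne hj]
    calc ∑ j, u j * Function.update x i a j
        = ∑ j, Function.update (fun j => u j * x j) i (u i * a) j := by rw [hfun]
      _ = u i * a + ∑ j ∈ univ \ {i}, u j * x j :=
          Finset.sum_update_of_mem (Finset.mem_univ i) _ _
      _ = u i * a + ((∑ j, u j * x j) - ∑ j ∈ ({i} : Finset (Fin n)), u j * x j) := by
          rw [Finset.sum_sdiff_eq_sub (Finset.singleton_subset_iff.mpr (Finset.mem_univ i))]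
      _ = (∑ j, u j * x j) + u i * (a - x i) := by
          rw [Finset.sum_singleton]; ring
  simp_rw [hupdate, ← Finset.mul_sum]
  rw [mul_comm]
  congr 1
  have hinner : ∀ i : Fin n,
      ∑ a ∈ univ.filter (fun a : ZMod q => a ≠ x i), ZMod.stdAddChar (u i * (a - x i))
        = (if u i = 0 then (q : ℂ) else 0) - 1 := by
    intro i
    rw [Finset.filter_ne', Finset.sum_erase_eq_sub (Finset.mem_univ (x i))]
    congr 1
    · rw [← sum_stdAddChar_mul q (u i)]
      exact Fintype.sum_equiv (Equiv.subRight (x i)) _ _ (fun a => rfl)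
    · simp
  simp_rw [hinner]
  rw [Finset.sum_sub_distrib, Finset.sum_const, Finset.card_univ, Fintype.card_fin]
  have hcount : ∑ i : Fin n, (if u i = 0 then (q : ℂ) else 0)
      = ((univ.filter fun i => u i = 0).card : ℂ) * q := by
    rw [← Finset.sum_filter, Finset.sum_const, nsmul_eq_mul]
  rw [hcount]
  have hcard : (univ.filter fun i : Fin n => u i = 0).card + hammingNorm u = n := by
    have h := Finset.card_filter_add_card_filter_not
      (s := (univ : Finset (Fin n))) (p := fun i => u i = 0)
    simpa [hammingNorm] using h
  have hcardC : ((univ.filter fun i : Fin n => u i = 0).card : ℂ)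
      = (n : ℂ) - (hammingNorm u : ℂ) := by
    have := congrArg (fun m : ℕ => (m : ℂ)) hcard
    push_cast at this
    linear_combination this
  rw [hcardC]
  simp only [nsmul_eq_mul, mul_one]
  ring

lemma pair_split (q n : ℕ) [NeZero q]
    (w : ((Fin n → ZMod q) × (Fin n → ZMod q)) → ℂ) :
    ∑ p ∈ univ.filter (fun p : (Fin n → ZMod q) × (Fin n → ZMod q) =>
        hammingDist p.1 p.2 = 1), w p
      = ∑ x, ∑ y ∈ univ.filter (fun y => hammingDist x y = 1), w (x, y) := by
  rw [Finset.sum_filter, Fintype.sum_prod_type]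
  simp_rw [← Finset.sum_filter]

lemma pair_swap (q n : ℕ) [NeZero q]
    (w : ((Fin n → ZMod q) × (Fin n → ZMod q)) → ℂ) :
    ∑ p ∈ univ.filter (fun p : (Fin n → ZMod q) × (Fin n → ZMod q) =>
        hammingDist p.1 p.2 = 1), w p
      = ∑ p ∈ univ.filter (fun p : (Fin n → ZMod q) × (Fin n → ZMod q) =>
        hammingDist p.1 p.2 = 1), w (p.2, p.1) := by
  refine Finset.sum_equiv (Equiv.prodComm _ _) ?_ ?_
  · intro p
    simp only [Finset.mem_filter, Finset.mem_univ, true_and, Equiv.prodComm_apply,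
      Prod.fst_swap, Prod.snd_swap]
    constructor <;> intro h
    · rwa [hammingDist_comm]
    · rwa [hammingDist_comm]
  · intro p _
    rfl

lemma card_T (q n : ℕ) [NeZero q] (hq : 2 ≤ q) :
    (((univ.filter (fun p : (Fin n → ZMod q) × (Fin n → ZMod q) =>
        hammingDist p.1 p.2 = 1)).card : ℂ))
      = (n : ℂ) * ((q : ℂ) - 1) * (q : ℂ) ^ n := by
  rw [Finset.card_eq_sum_ones, Nat.cast_sum]
  push_cast
  rw [show ∑ p ∈ univ.filter (fun p : (Fin n → ZMod q) × (Fin n → ZMod q) =>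
      hammingDist p.1 p.2 = 1), (1 : ℂ)
    = ∑ x : Fin n → ZMod q, ∑ y ∈ univ.filter (fun y => hammingDist x y = 1), (1 : ℂ) from
      pair_split q n (fun _ => (1 : ℂ))]
  have h1 : ∀ x : Fin n → ZMod q,
      ∑ y ∈ univ.filter (fun y => hammingDist x y = 1), (1 : ℂ)
        = (n : ℂ) * ((q : ℂ) - 1) := by
    intro x
    rw [sum_neighbors q n x (fun _ => (1 : ℂ))]
    have h2 : ∀ i : Fin n,
        ∑ a ∈ univ.filter (fun a : ZMod q => a ≠ x i), (1 : ℂ) = (q : ℂ) - 1 := by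
      intro i
      rw [Finset.sum_const, Finset.filter_ne',
        Finset.card_erase_of_mem (Finset.mem_univ _), Finset.card_univ, ZMod.card,
        nsmul_eq_mul, mul_one]
      have h1q : (1 : ℕ) ≤ q := le_trans one_le_two hq
      push_cast [Nat.cast_sub h1q]
      ring
    simp_rw [h2]
    rw [Finset.sum_const, Finset.card_univ, Fintype.card_fin, nsmul_eq_mul]
  simp_rw [h1]
  rw [Finset.sum_const, Finset.card_univ, nsmul_eq_mul]
  have : (Fintype.card (Fin n → ZMod q) : ℂ) = (q : ℂ) ^ n := by
    rw [Fintype.card_fun, ZMod.card, Fintype.card_fin]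
    push_cast
    ring
  rw [this]
  ring

lemma conj_lam (q n : ℕ) (m : ℕ) :
    (starRingEnd ℂ) ((n : ℂ) * ((q : ℂ) - 1) - (q : ℂ) * (m : ℂ))
      = (n : ℂ) * ((q : ℂ) - 1) - (q : ℂ) * (m : ℂ) := by
  simp [map_sub, map_mul, map_natCast, map_one]

lemma fhat_adjOp (q n : ℕ) [NeZero q] (f : (Fin n → ZMod q) → ℂ) (u : Fin n → ZMod q) :
    fhat q n (adjOp q n f) u
      = ((n : ℂ) * ((q : ℂ) - 1) - (q : ℂ) * (hammingNorm u : ℂ)) * fhat q n f u := by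
  set L : ℂ := (n : ℂ) * ((q : ℂ) - 1) - (q : ℂ) * (hammingNorm u : ℂ) with hL
  rw [fhat, fhat]
  have step1 : ∑ x, adjOp q n f x * (starRingEnd ℂ) (chi q n u x)
      = ∑ x : Fin n → ZMod q, ∑ y ∈ univ.filter (fun y => hammingDist x y = 1),
          f y * (starRingEnd ℂ) (chi q n u x) := by
    refine Finset.sum_congr rfl fun x _ => ?_
    rw [adjOp, Finset.sum_mul]
  rw [step1]
  rw [← pair_split q n (fun p => f p.2 * (starRingEnd ℂ) (chi q n u p.1)),
    pair_swap q n (fun p => f p.2 * (starRingEnd ℂ) (chi q n u p.1)),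
    pair_split q n (fun p => f (p.2, p.1).2 * (starRingEnd ℂ) (chi q n u (p.2, p.1).1))]
  have step2 : ∀ x : Fin n → ZMod q,
      ∑ y ∈ univ.filter (fun y => hammingDist x y = 1),
          f x * (starRingEnd ℂ) (chi q n u y)
        = L * (f x * (starRingEnd ℂ) (chi q n u x)) := by
    intro x
    rw [← Finset.mul_sum, ← map_sum, adj_chi, map_mul, ← hL, conj_lam]
    ring
  simp only at step2 ⊢
  simp_rw [step2]
  rw [← Finset.mul_sum]
  ring

end Aux

theorem stmt4 (q n d : ℕ) [NeZero q] (hq : 2 ≤ q)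
    (f : (Fin n → ZMod q) → ℂ) (hbool : ∀ x, f x = 1 ∨ f x = -1)
    (hdeg : ∀ u : Fin n → ZMod q, d < hammingNorm u → fhat q n f u = 0) :
    (nuOrd q n f : ℝ) / 2 ≤ (d : ℝ) / 4 * (q : ℝ) ^ (n + 1) := by
  have hqn : ((q : ℂ) ^ n) ≠ 0 := pow_ne_zero _ (Nat.cast_ne_zero.mpr (NeZero.ne q))
  have hconjf : ∀ x, (starRingEnd ℂ) (f x) = f x := by
    intro x; rcases hbool x with h | h <;> simp [h]
  have hff : ∀ x, f x * f x = 1 := by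
    intro x; rcases hbool x with h | h <;> rw [h] <;> norm_num
  have hcardX : (Fintype.card (Fin n → ZMod q) : ℂ) = (q : ℂ) ^ n := by
    rw [Fintype.card_fun, ZMod.card, Fintype.card_fin]; push_cast; ring
  -- Parseval
  have hpar : ∑ u : Fin n → ZMod q, (Complex.normSq (fhat q n f u) : ℂ) = 1 := by
    have h := plancherel q n f f
    simp_rw [hconjf, hff, Complex.mul_conj] at h
    rw [Finset.sum_const, Finset.card_univ, nsmul_eq_mul, mul_one, hcardX] at h
    exact mul_left_cancel₀ hqn (by rw [h, mul_one])
  -- inner product with adjacency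
  have hB : ∑ p ∈ univ.filter (fun p : (Fin n → ZMod q) × (Fin n → ZMod q) =>
        hammingDist p.1 p.2 = 1), f p.1 * f p.2
      = (q : ℂ) ^ n * ∑ u, ((n : ℂ) * ((q : ℂ) - 1) - (q : ℂ) * (hammingNorm u : ℂ))
          * (Complex.normSq (fhat q n f u) : ℂ) := by
    have hpl := plancherel q n f (adjOp q n f)
    have hAreal : ∀ x, (starRingEnd ℂ) (adjOp q n f x) = adjOp q n f x := by
      intro x
      rw [adjOp, map_sum]
      exact Finset.sum_congr rfl fun y _ => hconjf y
    simp_rw [hAreal] at hpl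
    have hrhs : ∀ x, f x * adjOp q n f x
        = ∑ y ∈ univ.filter (fun y => hammingDist x y = 1), f x * f y := by
      intro x; rw [adjOp, Finset.mul_sum]
    simp_rw [hrhs] at hpl
    rw [← pair_split q n (fun p => f p.1 * f p.2)] at hpl
    rw [← hpl]
    congr 1
    refine Finset.sum_congr rfl fun u _ => ?_
    rw [fhat_adjOp, map_mul, conj_lam, ← Complex.mul_conj]
    ring
  -- splitting into equal/unequal pairs
  have hsplit : ∑ p ∈ univ.filter (fun p : (Fin n → ZMod q) × (Fin n → ZMod q) =>
        hammingDist p.1 p.2 = 1), f p.1 * f p.2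
      = (((univ.filter (fun p : (Fin n → ZMod q) × (Fin n → ZMod q) =>
          hammingDist p.1 p.2 = 1)).card : ℂ)) - 2 * (nuOrd q n f : ℂ) := by
    have hterm : ∀ p ∈ univ.filter (fun p : (Fin n → ZMod q) × (Fin n → ZMod q) =>
        hammingDist p.1 p.2 = 1), f p.1 * f p.2
          = 1 - 2 * (if f p.1 ≠ f p.2 then (1 : ℂ) else 0) := by
      intro p _
      rcases hbool p.1 with h1 | h1 <;> rcases hbool p.2 with h2 | h2 <;>
        rw [h1, h2] <;> norm_num
    rw [Finset.sum_congr rfl hterm, Finset.sum_sub_distrib, Finset.sum_const,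
      ← Finset.mul_sum, nsmul_eq_mul, mul_one]
    congr 1
    rw [Finset.sum_boole, nuOrd, Finset.filter_filter]
  have hT := card_T q n hq
  -- the exact identity 2ν = q^n Σ q|u| |f̂(u)|²
  have h1 : ∑ u : Fin n → ZMod q,
        (q : ℂ) * (hammingNorm u : ℂ) * (Complex.normSq (fhat q n f u) : ℂ)
      = (n : ℂ) * ((q : ℂ) - 1) * ∑ u, (Complex.normSq (fhat q n f u) : ℂ)
        - ∑ u, ((n : ℂ) * ((q : ℂ) - 1) - (q : ℂ) * (hammingNorm u : ℂ))
            * (Complex.normSq (fhat q n f u) : ℂ) := by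
    rw [Finset.mul_sum, ← Finset.sum_sub_distrib]
    exact Finset.sum_congr rfl fun u _ => by ring
  have hfinal : 2 * (nuOrd q n f : ℂ)
      = (q : ℂ) ^ n * ∑ u : Fin n → ZMod q,
          (q : ℂ) * (hammingNorm u : ℂ) * (Complex.normSq (fhat q n f u) : ℂ) := by
    linear_combination hsplit - hB + hT
      - (q : ℂ) ^ n * ((n : ℂ) * ((q : ℂ) - 1)) * hpar - (q : ℂ) ^ n * h1
  -- move to the reals
  have hparR : ∑ u : Fin n → ZMod q, Complex.normSq (fhat q n f u) = 1 := by
    have := hpar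
    exact_mod_cast this
  have hrealR : 2 * (nuOrd q n f : ℝ)
      = (q : ℝ) ^ n * ∑ u : Fin n → ZMod q,
          (q : ℝ) * (hammingNorm u : ℝ) * Complex.normSq (fhat q n f u) := by
    have : ((2 * (nuOrd q n f : ℝ) : ℝ) : ℂ)
        = (((q : ℝ) ^ n * ∑ u : Fin n → ZMod q,
            (q : ℝ) * (hammingNorm u : ℝ) * Complex.normSq (fhat q n f u) : ℝ) : ℂ) := by
      push_cast
      linear_combination hfinal
    exact_mod_cast this
  -- the bound
  have hbound : ∑ u : Fin n → ZMod q,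
      (q : ℝ) * (hammingNorm u : ℝ) * Complex.normSq (fhat q n f u)
        ≤ (q : ℝ) * (d : ℝ) := by
    calc ∑ u : Fin n → ZMod q,
        (q : ℝ) * (hammingNorm u : ℝ) * Complex.normSq (fhat q n f u)
        ≤ ∑ u : Fin n → ZMod q, (q : ℝ) * (d : ℝ) * Complex.normSq (fhat q n f u) := by
          refine Finset.sum_le_sum fun u _ => ?_
          rcases le_or_gt (hammingNorm u) d with h | h
          · have h1 : (hammingNorm u : ℝ) ≤ (d : ℝ) := Nat.cast_le.mpr h
            have h2 : (0 : ℝ) ≤ Complex.normSq (fhat q n f u) := Complex.normSq_nonneg _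
            have h3 : (0 : ℝ) ≤ (q : ℝ) := Nat.cast_nonneg q
            exact mul_le_mul_of_nonneg_right (mul_le_mul_of_nonneg_left h1 h3) h2
          · rw [hdeg u h]
            simp
      _ = (q : ℝ) * (d : ℝ) * ∑ u : Fin n → ZMod q, Complex.normSq (fhat q n f u) := by
          rw [Finset.mul_sum]
      _ = (q : ℝ) * (d : ℝ) := by rw [hparR, mul_one]
  have hqnR : (0 : ℝ) ≤ (q : ℝ) ^ n := by positivity
  have hmain : 2 * (nuOrd q n f : ℝ) ≤ (q : ℝ) ^ n * ((q : ℝ) * (d : ℝ)) := by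
    rw [hrealR]
    exact mul_le_mul_of_nonneg_left hbound hqnR
  have hpow : (q : ℝ) ^ (n + 1) = (q : ℝ) ^ n * (q : ℝ) := by rw [pow_succ]
  rw [hpow]
  nlinarith [hmain]
end

section
/- Let q ≥ 3 and let f : (ℤ_q)^n → ℂ be a nonzero function in U_{[k,m]}(n,q) with k + m ≤ n. Then the support of f has size at least 2^k · (q−1)^k · q^{n−k−m}. -/
open Finset BigOperators
open scoped Classical

namespace UP
variable {q : ℕ}

noncomputable def ee (q : ℕ) (t : ZMod q) : ℂ :=
  Complex.exp (2 * Real.pi * Complex.I * (t.val : ℂ) / q)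

noncomputable def om (q : ℕ) : ℂ := Complex.exp (2 * Real.pi * Complex.I / q)

lemma om_pow_q [NeZero q] : om q ^ q = 1 := by
  rw [om, ← Complex.exp_nat_mul]
  have hq : (q:ℂ) ≠ 0 := by exact_mod_cast (NeZero.ne q)
  rw [show (q:ℂ) * (2 * Real.pi * Complex.I / q) = 2 * Real.pi * Complex.I by
    field_simp]
  exact Complex.exp_two_pi_mul_I

lemma ee_eq_om_pow (t : ZMod q) : ee q t = om q ^ t.val := by
  rw [om, ← Complex.exp_nat_mul, ee]
  ring_nf

lemma ee_zero [NeZero q] : ee q 0 = 1 := by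
  simp [ee, ZMod.val_zero]

lemma ee_add [NeZero q] (a b : ZMod q) : ee q (a + b) = ee q a * ee q b := by
  rw [ee_eq_om_pow, ee_eq_om_pow, ee_eq_om_pow, ← pow_add, ZMod.val_add,
    ← pow_eq_pow_mod _ om_pow_q]

lemma ee_ne_zero (t : ZMod q) : ee q t ≠ 0 := Complex.exp_ne_zero _

lemma ee_mul_ee_neg [NeZero q] (a b : ZMod q) : ee q a * ee q (-b) = ee q (a - b) := by
  rw [← ee_add]; ring_nf

lemma conj_ee [NeZero q] (t : ZMod q) : (starRingEnd ℂ) (ee q t) = ee q (-t) := by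
  have h1 : (starRingEnd ℂ) (ee q t) * ee q t = 1 := by
    rw [ee, ← Complex.exp_conj, ← Complex.exp_add]
    have : (starRingEnd ℂ) (2 * Real.pi * Complex.I * (t.val : ℂ) / q) =
        -(2 * Real.pi * Complex.I * (t.val : ℂ) / q) := by
      simp only [map_div₀, map_mul, map_ofNat, Complex.conj_I, Complex.conj_natCast,
        Complex.conj_ofReal]
      ring
    rw [this, neg_add_cancel, Complex.exp_zero]
  have h2 : ee q (-t) * ee q t = 1 := by
    rw [← ee_add, neg_add_cancel, ee_zero]
  exact mul_right_cancel₀ (ee_ne_zero t) (h1.trans h2.symm)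

lemma om_primitive [NeZero q] : IsPrimitiveRoot (om q) q :=
  Complex.isPrimitiveRoot_exp q (NeZero.ne q)

lemma sum_ee [NeZero q] (d : ZMod q) :
    ∑ c : ZMod q, ee q (c * d) = if d = 0 then (q : ℂ) else 0 := by
  split_ifs with hd
  · subst hd
    simp [ee_zero, ZMod.card]
  · have key : ∀ c : ZMod q, ee q (c * d) = (om q ^ d.val) ^ c.val := by
      intro c
      rw [ee_eq_om_pow, ← pow_mul, ZMod.val_mul, ← pow_eq_pow_mod _ om_pow_q,
        mul_comm c.val d.val]
    have hbij : ∑ c : ZMod q, ee q (c * d) = ∑ j ∈ range q, (om q ^ d.val) ^ j := by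
      rw [Finset.sum_congr rfl (fun c _ => key c)]
      apply Finset.sum_nbij' (fun c => ZMod.val c) (fun j => (j : ZMod q))
      · intro c _; exact Finset.mem_range.mpr (ZMod.val_lt c)
      · intro j _; exact Finset.mem_univ _
      · intro c _; exact ZMod.natCast_rightInverse c
      · intro j hj; exact ZMod.val_cast_of_lt (Finset.mem_range.mp hj)
      · intro c _; rfl
    rw [hbij]
    have hzeta1 : om q ^ d.val ≠ 1 := by
      apply om_primitive.pow_ne_one_of_pos_of_lt
      · exact (ZMod.val_pos.mpr hd).ne'
      · exact ZMod.val_lt d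
    have hzq : (om q ^ d.val) ^ q = 1 := by
      rw [← pow_mul, mul_comm, pow_mul, om_pow_q, one_pow]
    rw [geom_sum_eq hzeta1 q, hzq, sub_self, zero_div]

lemma chi_eq (n : ℕ) (u x : Fin n → ZMod q) : chi q n u x = ee q (∑ i, u i * x i) := rfl

noncomputable def slice {n : ℕ} (f : (Fin (n + 1) → ZMod q) → ℂ)
    (i : Fin (n + 1)) (a : ZMod q) : (Fin n → ZMod q) → ℂ :=
  fun y => f (i.insertNth a y)

lemma chi_insertNth [NeZero q] {n : ℕ} (i : Fin (n + 1)) (c a : ZMod q)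
    (v y : Fin n → ZMod q) :
    chi q (n + 1) (i.insertNth c v) (i.insertNth a y) = ee q (c * a) * chi q n v y := by
  rw [chi_eq, chi_eq, ← ee_add]
  congr 1
  have h := Fin.sum_univ_succAbove
    (fun j => Fin.insertNth (α := fun _ => ZMod q) i c v j *
      Fin.insertNth (α := fun _ => ZMod q) i a y j) i
  simp only [Fin.insertNth_apply_same, Fin.insertNth_apply_succAbove] at h
  exact h

lemma sum_insertNth [NeZero q] {M : Type*} [AddCommMonoid M] {n : ℕ}
    (F : (Fin (n + 1) → ZMod q) → M) (i : Fin (n + 1)) :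
    ∑ x, F x = ∑ a : ZMod q, ∑ y : Fin n → ZMod q, F (i.insertNth a y) := by
  have h1 : ∑ p : ZMod q × (Fin n → ZMod q), F (i.insertNth p.1 p.2) = ∑ x, F x :=
    Fintype.sum_equiv (Fin.insertNthEquiv (fun _ => ZMod q) i) _ _ (fun p => rfl)
  have h2 : ∑ p : ZMod q × (Fin n → ZMod q), F (i.insertNth p.1 p.2)
      = ∑ a : ZMod q, ∑ y : Fin n → ZMod q, F (i.insertNth a y) :=
    Fintype.sum_prod_type _
  rw [← h1, h2]

lemma fhat_insertNth [NeZero q] {n : ℕ} (f : (Fin (n + 1) → ZMod q) → ℂ)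
    (i : Fin (n + 1)) (c : ZMod q) (v : Fin n → ZMod q) :
    fhat q (n + 1) f (i.insertNth c v) =
      (1 / (q : ℂ)) * ∑ a : ZMod q, ee q (-(c * a)) * fhat q n (slice f i a) v := by
  rw [fhat, sum_insertNth (fun x => f x * (starRingEnd ℂ) (chi q (n+1) (i.insertNth c v) x)) i]
  have : ∀ a y, f (i.insertNth a y) * (starRingEnd ℂ) (chi q (n+1) (i.insertNth c v) (i.insertNth a y))
      = ee q (-(c * a)) * (slice f i a y * (starRingEnd ℂ) (chi q n v y)) := by
    intro a y
    rw [chi_insertNth, map_mul, conj_ee, slice]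
    ring
  simp_rw [this]
  rw [Finset.mul_sum, Finset.mul_sum]
  apply Finset.sum_congr rfl
  intro a _
  rw [← Finset.mul_sum, fhat]
  rw [pow_succ]
  ring

lemma fhat_slice [NeZero q] {n : ℕ} (f : (Fin (n + 1) → ZMod q) → ℂ)
    (i : Fin (n + 1)) (a : ZMod q) (v : Fin n → ZMod q) :
    fhat q n (slice f i a) v
      = ∑ c : ZMod q, ee q (c * a) * fhat q (n + 1) f (i.insertNth c v) := by
  have hq : (q : ℂ) ≠ 0 := by exact_mod_cast (NeZero.ne q)
  simp_rw [fhat_insertNth]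
  have step : ∀ c : ZMod q,
      ee q (c * a) * ((1 / (q:ℂ)) * ∑ b : ZMod q, ee q (-(c * b)) * fhat q n (slice f i b) v)
        = ∑ b : ZMod q, (1 / (q:ℂ)) * (ee q (c * (a - b)) * fhat q n (slice f i b) v) := by
    intro c
    rw [Finset.mul_sum, Finset.mul_sum]
    apply Finset.sum_congr rfl
    intro b _
    have h : ee q (c * a) * ee q (-(c * b)) = ee q (c * (a - b)) := by
      rw [ee_mul_ee_neg, mul_sub]
    rw [← h]
    ring
  rw [Finset.sum_congr rfl (fun c _ => step c), Finset.sum_comm]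
  have inner : ∀ b : ZMod q,
      (∑ c : ZMod q, (1 / (q:ℂ)) * (ee q (c * (a - b)) * fhat q n (slice f i b) v))
        = if b = a then fhat q n (slice f i b) v else 0 := by
    intro b
    have : (∑ c : ZMod q, (1 / (q:ℂ)) * (ee q (c * (a - b)) * fhat q n (slice f i b) v))
        = (1 / (q:ℂ)) * fhat q n (slice f i b) v * ∑ c : ZMod q, ee q (c * (a - b)) := by
      rw [Finset.mul_sum]
      apply Finset.sum_congr rfl
      intro c _
      ring
    rw [this, sum_ee]
    by_cases hb : b = a
    · subst hb
      simp only [sub_self, if_pos rfl, if_pos rfl, if_pos trivial]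
      field_simp
    · have hab : a - b ≠ 0 := sub_ne_zero.mpr (Ne.symm hb)
      simp [hab, hb]
  rw [Finset.sum_congr rfl (fun b _ => inner b), Finset.sum_ite_eq' univ a
    (fun b => fhat q n (slice f i b) v)]
  simp

end UP

-- continuing namespace UP (appended for testing)
namespace UP
variable {q : ℕ}

lemma fhat_sub [NeZero q] {n : ℕ} (g h : (Fin n → ZMod q) → ℂ) (v : Fin n → ZMod q) :
    fhat q n (fun y => g y - h y) v = fhat q n g v - fhat q n h v := by
  rw [fhat, fhat, fhat, ← mul_sub, ← Finset.sum_sub_distrib]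
  congr 1
  apply Finset.sum_congr rfl
  intro x _
  ring

lemma fhat_zero_fn [NeZero q] {n : ℕ} (g : (Fin n → ZMod q) → ℂ) (hg : g = 0)
    (v : Fin n → ZMod q) : fhat q n g v = 0 := by
  subst hg
  simp [fhat]

lemma eq_zero_of_fhat [NeZero q] :
    ∀ {n : ℕ} (f : (Fin n → ZMod q) → ℂ), (∀ u, fhat q n f u = 0) → f = 0 := by
  intro n
  induction n with
  | zero =>
      intro f h
      funext x
      have h0 := h x
      rw [fhat] at h0
      simp only [pow_zero, one_div, inv_one, one_mul] at h0
      rw [Fintype.sum_subsingleton _ x] at h0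
      have hchi : chi q 0 x x = 1 := by
        rw [UP.chi_eq]
        rw [show (∑ i : Fin 0, x i * x i) = 0 from Finset.sum_empty]
        exact ee_zero
      rw [hchi] at h0
      simpa using h0
  | succ n IH =>
      intro f h
      have hs : ∀ a : ZMod q, slice f (0 : Fin (n+1)) a = 0 := by
        intro a
        apply IH
        intro v
        rw [fhat_slice]
        simp [h]
      funext x
      have hx : x = (0 : Fin (n+1)).insertNth (x 0) (Fin.removeNth 0 x) := by
        rw [Fin.insertNth_self_removeNth]
      calc f x = slice f 0 (x 0) (Fin.removeNth 0 x) := by rw [slice]; rw [← hx]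
        _ = 0 := by rw [hs]; rfl

lemma hammingNorm_insertNth [NeZero q] {n : ℕ} (i : Fin (n + 1)) (c : ZMod q)
    (v : Fin n → ZMod q) :
    hammingNorm (Fin.insertNth (α := fun _ => ZMod q) i c v)
      = (if c = 0 then 0 else 1) + hammingNorm v := by
  unfold hammingNorm
  rw [Finset.card_filter, Finset.card_filter]
  have h := Fin.sum_univ_succAbove
    (fun j => (if Fin.insertNth (α := fun _ => ZMod q) i c v j ≠ 0 then 1 else 0 : ℕ)) i
  simp only [Fin.insertNth_apply_same, Fin.insertNth_apply_succAbove] at h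
  rw [h]
  congr 1
  split_ifs with h1 h2 h2 <;> simp_all

lemma suppCard_slice [NeZero q] {n : ℕ} (f : (Fin (n + 1) → ZMod q) → ℂ) (i : Fin (n + 1)) :
    suppCard q (n + 1) f = ∑ a : ZMod q, suppCard q n (slice f i a) := by
  unfold suppCard
  rw [Finset.card_filter]
  rw [sum_insertNth (fun x => if f x ≠ 0 then 1 else 0) i]
  apply Finset.sum_congr rfl
  intro a _
  rw [Finset.card_filter]
  rfl

lemma suppCard_pos [NeZero q] {n : ℕ} (f : (Fin n → ZMod q) → ℂ) (hf : f ≠ 0) :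
    1 ≤ suppCard q n f := by
  obtain ⟨x, hx⟩ := Function.ne_iff.mp hf
  exact Finset.card_pos.mpr ⟨x, Finset.mem_filter.mpr ⟨Finset.mem_univ _, hx⟩⟩

lemma suppCard_sub_le [NeZero q] {n : ℕ} (g h : (Fin n → ZMod q) → ℂ) :
    suppCard q n (fun y => g y - h y) ≤ suppCard q n g + suppCard q n h := by
  unfold suppCard
  calc (univ.filter (fun y => g y - h y ≠ 0)).card
      ≤ ((univ.filter (fun y => g y ≠ 0)) ∪ (univ.filter (fun y => h y ≠ 0))).card := by
        apply Finset.card_le_card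
        intro y hy
        simp only [Finset.mem_filter, Finset.mem_univ, true_and] at hy
        simp only [Finset.mem_union, Finset.mem_filter, Finset.mem_univ, true_and]
        by_contra hc
        push_neg at hc
        rw [hc.1, hc.2, sub_zero] at hy
        exact hy rfl
    _ ≤ _ := Finset.card_union_le _ _

lemma exists_slice_ne [NeZero q] {n : ℕ} {f : (Fin (n + 1) → ZMod q) → ℂ} :
    ∀ (N : ℕ) (x y : Fin (n + 1) → ZMod q),
      (univ.filter fun j => x j ≠ y j).card ≤ N → f x ≠ f y →
      ∃ (i : Fin (n + 1)) (a b : ZMod q), slice f i a ≠ slice f i b := by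
  intro N
  induction N with
  | zero =>
      intro x y hc hne
      exfalso
      apply hne
      have : x = y := by
        funext j
        by_contra hj
        have : j ∈ univ.filter fun j => x j ≠ y j := Finset.mem_filter.mpr ⟨Finset.mem_univ _, hj⟩
        have := Finset.card_pos.mpr ⟨j, this⟩
        omega
      rw [this]
  | succ N IH =>
      intro x y hc hne
      have hxy : x ≠ y := fun h => hne (by rw [h])
      obtain ⟨i, hi⟩ := Function.ne_iff.mp hxy
      set x' := Function.update x i (y i) with hx'
      by_cases h1 : f x = f x'
      · apply IH x' y _ (h1 ▸ hne)
        have hsub : (univ.filter fun j => x' j ≠ y j) ⊆ (univ.filter fun j => x j ≠ y j).erase i := by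
          intro j hj
          simp only [Finset.mem_filter, Finset.mem_univ, true_and] at hj
          rw [Finset.mem_erase]
          constructor
          · intro hji
            subst hji
            apply hj
            rw [hx', Function.update_self]
          · simp only [Finset.mem_filter, Finset.mem_univ, true_and]
            intro hxj
            apply hj
            rw [hx', Function.update_of_ne, hxj]
            intro hji
            subst hji
            exact hj (by rw [hx', Function.update_self])
        have hmem : i ∈ (univ.filter fun j => x j ≠ y j) :=
          Finset.mem_filter.mpr ⟨Finset.mem_univ _, hi⟩
        calc (univ.filter fun j => x' j ≠ y j).card
            ≤ ((univ.filter fun j => x j ≠ y j).erase i).card := Finset.card_le_card hsub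
          _ = (univ.filter fun j => x j ≠ y j).card - 1 := Finset.card_erase_of_mem hmem
          _ ≤ N := by omega
      · refine ⟨i, x i, y i, ?_⟩
        intro heq
        apply h1
        have h2 := congrFun heq (Fin.removeNth i x)
        rw [slice, slice, Fin.insertNth_self_removeNth] at h2
        rw [h2, hx']
        congr 1
        exact (Fin.insertNth_removeNth i (y i) x).symm ▸ rfl

end UP

namespace UP
variable {q : ℕ}

lemma slice_eval [NeZero q] {n : ℕ} (f : (Fin (n + 1) → ZMod q) → ℂ) (i : Fin (n + 1))
    (x : Fin (n + 1) → ZMod q) : f x = slice f i (x i) (i.removeNth x) := by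
  rw [slice, Fin.insertNth_self_removeNth]

lemma spec_slice [NeZero q] {n k m : ℕ} {f : (Fin (n + 1) → ZMod q) → ℂ} {i : Fin (n + 1)}
    (H : ∀ u, fhat q (n+1) f u ≠ 0 → k ≤ hammingNorm u ∧ hammingNorm u ≤ m)
    (a : ZMod q) (v : Fin n → ZMod q) (hv : fhat q n (slice f i a) v ≠ 0) :
    k - 1 ≤ hammingNorm v ∧ hammingNorm v ≤ m := by
  rw [fhat_slice] at hv
  obtain ⟨c, -, hc⟩ := Finset.exists_ne_zero_of_sum_ne_zero hv
  have hfne : fhat q (n+1) f (i.insertNth c v) ≠ 0 := fun h => hc (by rw [h, mul_zero])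
  have hH := H _ hfne
  rw [hammingNorm_insertNth] at hH
  split_ifs at hH <;> omega

lemma spec_diff [NeZero q] {n k m : ℕ} {f : (Fin (n + 1) → ZMod q) → ℂ} {i : Fin (n + 1)}
    (H : ∀ u, fhat q (n+1) f u ≠ 0 → k ≤ hammingNorm u ∧ hammingNorm u ≤ m)
    (a b : ZMod q) (v : Fin n → ZMod q)
    (hv : fhat q n (fun y => slice f i a y - slice f i b y) v ≠ 0) :
    k ≤ 1 + hammingNorm v ∧ 1 + hammingNorm v ≤ m := by
  rw [fhat_sub, fhat_slice, fhat_slice, ← Finset.sum_sub_distrib] at hv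
  obtain ⟨c, -, hc⟩ := Finset.exists_ne_zero_of_sum_ne_zero hv
  have hcne : c ≠ 0 := by
    rintro rfl
    apply hc
    rw [zero_mul, zero_mul, sub_self]
  have hfne : fhat q (n+1) f (i.insertNth c v) ≠ 0 := by
    intro h
    apply hc
    rw [h, mul_zero, mul_zero, sub_self]
  have hH := H _ hfne
  rw [hammingNorm_insertNth, if_neg hcne] at hH
  exact hH

lemma spec_single [NeZero q] {n k m : ℕ} {f : (Fin (n + 1) → ZMod q) → ℂ} {i : Fin (n + 1)}
    (hq2 : 2 ≤ q)
    (H : ∀ u, fhat q (n+1) f u ≠ 0 → k ≤ hammingNorm u ∧ hammingNorm u ≤ m)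
    (a₀ : ZMod q) (hb : ∀ b, b ≠ a₀ → slice f i b = 0)
    (v : Fin n → ZMod q) (hv : fhat q n (slice f i a₀) v ≠ 0) :
    k ≤ hammingNorm v ∧ hammingNorm v + 1 ≤ m := by
  have hqC : (q : ℂ) ≠ 0 := by exact_mod_cast (NeZero.ne q)
  have key : ∀ c : ZMod q, fhat q (n+1) f (i.insertNth c v) ≠ 0 := by
    intro c
    rw [fhat_insertNth]
    have hsum : (∑ a : ZMod q, ee q (-(c * a)) * fhat q n (slice f i a) v)
        = ee q (-(c * a₀)) * fhat q n (slice f i a₀) v := by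
      apply Finset.sum_eq_single a₀
      · intro b _ hbne
        rw [fhat_zero_fn _ (hb b hbne), mul_zero]
      · intro h
        exact absurd (Finset.mem_univ a₀) h
    rw [hsum]
    exact mul_ne_zero (one_div_ne_zero hqC) (mul_ne_zero (ee_ne_zero _) hv)
  haveI : Fact (1 < q) := ⟨by omega⟩
  constructor
  · have hH := H _ (key 0)
    rw [hammingNorm_insertNth, if_pos rfl] at hH
    omega
  · have h1 : (1 : ZMod q) ≠ 0 := one_ne_zero
    have hH := H _ (key 1)
    rw [hammingNorm_insertNth, if_neg h1] at hH
    omega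

lemma arith2 {q k m n : ℕ} (hq : 3 ≤ q) (hkm : k + m ≤ n + 1) (hm : 1 ≤ m) :
    2 ^ k * (q - 1) ^ k * q ^ (n + 1 - k - m) ≤
      2 ^ (k - 1) * (q - 1) ^ (k - 1) * q ^ (n - (k - 1) - (m - 1)) +
        2 ^ (k - 1) * (q - 1) ^ (k - 1) * q ^ (n - (k - 1) - (m - 1)) := by
  rcases k with _ | k'
  · simp only [pow_zero, one_mul, Nat.zero_sub, Nat.sub_zero]
    have he : n - (m - 1) = n + 1 - m := by omega
    rw [he]
    exact Nat.le_add_left _ _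
  · simp only [Nat.add_sub_cancel]
    have he : n - k' - (m - 1) = (n + 1 - (k' + 1) - m) + 1 := by omega
    rw [he]
    set E := n + 1 - (k' + 1) - m with hE
    rw [pow_succ 2 k', pow_succ (q - 1) k', pow_succ q E]
    have h1 : q - 1 ≤ q := by omega
    calc 2 ^ k' * 2 * ((q - 1) ^ k' * (q - 1)) * q ^ E
        = 2 ^ k' * (q - 1) ^ k' * (q ^ E * (q - 1)) + 2 ^ k' * (q - 1) ^ k' * (q ^ E * (q - 1)) := by
          ring
      _ ≤ 2 ^ k' * (q - 1) ^ k' * (q ^ E * q) + 2 ^ k' * (q - 1) ^ k' * (q ^ E * q) := by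
          gcongr
  
lemma arith3 {q k m n : ℕ} (hq : 3 ≤ q) (hkm : k + m ≤ n + 1) (hk : 1 ≤ k) (hm : 1 ≤ m) :
    2 ^ k * (q - 1) ^ k * q ^ (n + 1 - k - m) ≤
      (q - 2) * (2 ^ (k - 1) * (q - 1) ^ (k - 1) * q ^ (n - (k - 1) - m)) +
        2 ^ (k - 1) * (q - 1) ^ (k - 1) * q ^ (n - (k - 1) - (m - 1)) := by
  obtain ⟨k', rfl⟩ : ∃ k', k = k' + 1 := ⟨k - 1, by omega⟩
  obtain ⟨m', rfl⟩ : ∃ m', m = m' + 1 := ⟨m - 1, by omega⟩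
  simp only [Nat.add_sub_cancel]
  have he1 : n - k' - m' = (n + 1 - (k' + 1) - (m' + 1)) + 1 := by omega
  have he2 : n - k' - (m' + 1) = n + 1 - (k' + 1) - (m' + 1) := by omega
  rw [he1, he2]
  set E := n + 1 - (k' + 1) - (m' + 1) with hE
  obtain ⟨r, rfl⟩ : ∃ r, q = r + 3 := ⟨q - 3, by omega⟩
  have hq1 : r + 3 - 1 = r + 2 := by omega
  have hq2 : r + 3 - 2 = r + 1 := by omega
  rw [hq1, hq2]
  apply le_of_eq
  rw [pow_succ 2 k', pow_succ (r + 2) k', pow_succ (r + 3) E]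
  ring

end UP

namespace UP

theorem main {q : ℕ} [NeZero q] (hq : 3 ≤ q) :
    ∀ (n k m : ℕ) (f : (Fin n → ZMod q) → ℂ), k + m ≤ n → f ≠ 0 →
      (∀ u, fhat q n f u ≠ 0 → k ≤ hammingNorm u ∧ hammingNorm u ≤ m) →
      2 ^ k * (q - 1) ^ k * q ^ (n - k - m) ≤ suppCard q n f := by
  intro n
  induction n with
  | zero =>
      intro k m f hkm hf hcoef
      have hk : k = 0 := by omega
      have hm : m = 0 := by omega
      subst hk; subst hm
      simpa using suppCard_pos f hf
  | succ n IH =>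
      intro k m f hkm hf hcoef
      by_cases htriv : k = 0 ∧ n + 1 ≤ m
      · obtain ⟨hk0, hmn⟩ := htriv
        subst hk0
        have he : n + 1 - 0 - m = 0 := by omega
        rw [he]
        simpa using suppCard_pos f hf
      -- choose a coordinate
      have hqC : (q : ℂ) ≠ 0 := by exact_mod_cast (NeZero.ne q)
      obtain ⟨i, hi⟩ : ∃ i : Fin (n + 1), k = 0 ∨ ∃ a b : ZMod q, slice f i a ≠ slice f i b := by
        rcases Nat.eq_zero_or_pos k with hk | hk
        · exact ⟨0, Or.inl hk⟩
        · have hne : ∃ x y, f x ≠ f y := by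
            by_contra hcon
            push_neg at hcon
            obtain ⟨x₀, hx₀⟩ := Function.ne_iff.mp hf
            have hx₀' : f x₀ ≠ 0 := by simpa using hx₀
            have h0 : fhat q (n + 1) f 0 ≠ 0 := by
              rw [fhat]
              have hterm : ∀ x : Fin (n + 1) → ZMod q,
                  f x * (starRingEnd ℂ) (chi q (n + 1) 0 x) = f x₀ := by
                intro x
                have hchi : chi q (n + 1) (0 : Fin (n+1) → ZMod q) x = 1 := by
                  rw [chi_eq]
                  have : (∑ j, (0 : Fin (n+1) → ZMod q) j * x j) = 0 := by simp
                  rw [this, ee_zero]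
                rw [hchi, map_one, mul_one, hcon x x₀]
              rw [Finset.sum_congr rfl (fun x _ => hterm x), Finset.sum_const]
              have hcard : (univ : Finset (Fin (n + 1) → ZMod q)).card = q ^ (n + 1) := by
                simp [Finset.card_univ, ZMod.card]
              rw [hcard]
              simp only [nsmul_eq_mul]
              push_cast
              exact mul_ne_zero (one_div_ne_zero (pow_ne_zero _ hqC))
                (mul_ne_zero (pow_ne_zero _ hqC) hx₀')
            have := (hcoef 0 h0).1
            rw [hammingNorm_zero] at this
            omega
          obtain ⟨x, y, hxy⟩ := hne
          obtain ⟨i, a, b, hab⟩ :=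
            exists_slice_ne (univ.filter fun j => x j ≠ y j).card x y le_rfl hxy
          exact ⟨i, Or.inr ⟨a, b, hab⟩⟩
      have hsum : suppCard q (n + 1) f = ∑ a : ZMod q, suppCard q n (slice f i a) :=
        suppCard_slice f i
      by_cases hall : ∀ a : ZMod q, slice f i a ≠ 0
      · -- case (iii): all slices nonzero
        rcases Nat.eq_zero_or_pos k with hk0 | hk1
        · -- k = 0
          subst hk0
          have hmn : m ≤ n := by
            rcases Nat.lt_or_ge m (n + 1) with h | h
            · omega
            · exact absurd ⟨rfl, h⟩ htriv
          have hbound : ∀ a : ZMod q,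
              2 ^ 0 * (q - 1) ^ 0 * q ^ (n - 0 - m) ≤ suppCard q n (slice f i a) := by
            intro a
            apply IH 0 m (slice f i a) (by omega) (hall a)
            intro v hv
            have := spec_slice hcoef a v hv
            omega
          simp only [pow_zero, one_mul, Nat.sub_zero] at hbound ⊢
          have he : n + 1 - m = (n - m) + 1 := by omega
          rw [he, pow_succ]
          have hle := Finset.card_nsmul_le_sum (univ : Finset (ZMod q))
            (fun a => suppCard q n (slice f i a)) (q ^ (n - m)) (fun a _ => hbound a)
          rw [Finset.card_univ, ZMod.card, smul_eq_mul] at hle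
          rw [hsum]
          calc q ^ (n - m) * q = q * q ^ (n - m) := by ring
            _ ≤ _ := hle
        · -- k ≥ 1
          obtain ⟨a₁, a₂, hpair⟩ := hi.resolve_left (by omega)
          have ha12 : a₁ ≠ a₂ := by rintro rfl; exact hpair rfl
          set g : (Fin n → ZMod q) → ℂ := fun y => slice f i a₁ y - slice f i a₂ y with hg
          have hgne : g ≠ 0 := by
            obtain ⟨y, hy⟩ := Function.ne_iff.mp hpair
            apply Function.ne_iff.mpr
            exact ⟨y, by simpa [hg] using sub_ne_zero.mpr hy⟩
          have hm1 : 1 ≤ m := by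
            obtain ⟨v, hv⟩ : ∃ v, fhat q n g v ≠ 0 := by
              by_contra hcv
              push_neg at hcv
              exact hgne (eq_zero_of_fhat g hcv)
            have := (spec_diff hcoef a₁ a₂ v hv).2
            omega
          have hsg : 2 ^ (k-1) * (q - 1) ^ (k-1) * q ^ (n - (k-1) - (m-1)) ≤ suppCard q n g := by
            apply IH (k-1) (m-1) g (by omega) hgne
            intro v hv
            have := spec_diff hcoef a₁ a₂ v hv
            omega
          have hs1 : ∀ a : ZMod q,
              2 ^ (k-1) * (q - 1) ^ (k-1) * q ^ (n - (k-1) - m) ≤ suppCard q n (slice f i a) := by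
            intro a
            apply IH (k-1) m (slice f i a) (by omega) (hall a)
            intro v hv
            have := spec_slice hcoef a v hv
            omega
          have hsplit := Finset.sum_sdiff (s₁ := ({a₁, a₂} : Finset (ZMod q))) (s₂ := univ)
            (f := fun a => suppCard q n (slice f i a)) (Finset.subset_univ _)
          rw [Finset.sum_pair ha12] at hsplit
          have hrest : (q - 2) * (2 ^ (k-1) * (q - 1) ^ (k-1) * q ^ (n - (k-1) - m))
              ≤ ∑ a ∈ (univ \ {a₁, a₂} : Finset (ZMod q)), suppCard q n (slice f i a) := by
            have hcard : (univ \ {a₁, a₂} : Finset (ZMod q)).card = q - 2 := by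
              rw [Finset.card_sdiff_of_subset (Finset.subset_univ _), Finset.card_pair ha12]
              simp [Finset.card_univ, ZMod.card]
            calc (q - 2) * (2 ^ (k-1) * (q - 1) ^ (k-1) * q ^ (n - (k-1) - m))
                = (univ \ {a₁, a₂} : Finset (ZMod q)).card
                    • (2 ^ (k-1) * (q - 1) ^ (k-1) * q ^ (n - (k-1) - m)) := by
                  rw [hcard, smul_eq_mul]
              _ ≤ _ := Finset.card_nsmul_le_sum _ _ _ (fun a _ => hs1 a)
          have hgle : suppCard q n g ≤ suppCard q n (slice f i a₁) + suppCard q n (slice f i a₂) :=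
            suppCard_sub_le _ _
          calc 2 ^ k * (q - 1) ^ k * q ^ (n + 1 - k - m)
              ≤ (q - 2) * (2 ^ (k-1) * (q - 1) ^ (k-1) * q ^ (n - (k-1) - m))
                + 2 ^ (k-1) * (q - 1) ^ (k-1) * q ^ (n - (k-1) - (m-1)) :=
                arith3 hq hkm hk1 hm1
            _ ≤ (∑ a ∈ (univ \ {a₁, a₂} : Finset (ZMod q)), suppCard q n (slice f i a))
                + (suppCard q n (slice f i a₁) + suppCard q n (slice f i a₂)) := by
                exact Nat.add_le_add hrest (le_trans hsg hgle)
            _ = suppCard q (n + 1) f := by rw [hsum, ← hsplit]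
      · -- some slice is zero
        push_neg at hall
        obtain ⟨b₀, hb₀⟩ := hall
        by_cases htwo : ∃ a₁ a₂ : ZMod q, a₁ ≠ a₂ ∧ slice f i a₁ ≠ 0 ∧ slice f i a₂ ≠ 0
        · -- case (ii)
          obtain ⟨a₁, a₂, ha12, hs₁, hs₂⟩ := htwo
          have hspec : ∀ a : ZMod q, slice f i a ≠ 0 →
              ∀ v, fhat q n (slice f i a) v ≠ 0 →
                k ≤ 1 + hammingNorm v ∧ 1 + hammingNorm v ≤ m := by
            intro a _ v hv
            have hrw : (fun y => slice f i a y - slice f i b₀ y) = slice f i a := by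
              funext y
              rw [congrFun hb₀ y]
              simp
            apply spec_diff hcoef a b₀ v
            rw [hrw]
            exact hv
          have hm1 : 1 ≤ m := by
            obtain ⟨v, hv⟩ : ∃ v, fhat q n (slice f i a₁) v ≠ 0 := by
              by_contra hcv
              push_neg at hcv
              exact hs₁ (eq_zero_of_fhat _ hcv)
            have := (hspec a₁ hs₁ v hv).2
            omega
          have hbnd : ∀ a : ZMod q, slice f i a ≠ 0 →
              2 ^ (k-1) * (q - 1) ^ (k-1) * q ^ (n - (k-1) - (m-1)) ≤ suppCard q n (slice f i a) := by
            intro a ha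
            apply IH (k-1) (m-1) (slice f i a) (by omega) ha
            intro v hv
            have := hspec a ha v hv
            omega
          calc 2 ^ k * (q - 1) ^ k * q ^ (n + 1 - k - m)
              ≤ 2 ^ (k-1) * (q - 1) ^ (k-1) * q ^ (n - (k-1) - (m-1))
                + 2 ^ (k-1) * (q - 1) ^ (k-1) * q ^ (n - (k-1) - (m-1)) := arith2 hq hkm hm1
            _ ≤ suppCard q n (slice f i a₁) + suppCard q n (slice f i a₂) :=
                Nat.add_le_add (hbnd a₁ hs₁) (hbnd a₂ hs₂)
            _ = ∑ a ∈ ({a₁, a₂} : Finset (ZMod q)), suppCard q n (slice f i a) :=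
                (Finset.sum_pair (f := fun a => suppCard q n (slice f i a)) ha12).symm
            _ ≤ ∑ a : ZMod q, suppCard q n (slice f i a) :=
                Finset.sum_le_sum_of_subset (Finset.subset_univ _)
            _ = suppCard q (n + 1) f := hsum.symm
        · -- case (i): at most one nonzero slice
          push_neg at htwo
          obtain ⟨a₀, ha₀⟩ : ∃ a₀ : ZMod q, slice f i a₀ ≠ 0 := by
            by_contra hcv
            push_neg at hcv
            apply hf
            funext x
            rw [slice_eval f i x, hcv]
            rfl
          have hb : ∀ b, b ≠ a₀ → slice f i b = 0 := fun b hbne =>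
            htwo a₀ b (Ne.symm hbne) ha₀
          have hspec : ∀ v, fhat q n (slice f i a₀) v ≠ 0 →
              k ≤ hammingNorm v ∧ hammingNorm v + 1 ≤ m :=
            fun v hv => spec_single (by omega) hcoef a₀ hb v hv
          have hm1 : 1 ≤ m := by
            obtain ⟨v, hv⟩ : ∃ v, fhat q n (slice f i a₀) v ≠ 0 := by
              by_contra hcv
              push_neg at hcv
              exact ha₀ (eq_zero_of_fhat _ hcv)
            have := (hspec v hv).2
            omega
          have hbnd : 2 ^ k * (q - 1) ^ k * q ^ (n - k - (m-1)) ≤ suppCard q n (slice f i a₀) := by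
            apply IH k (m-1) _ (by omega) ha₀
            intro v hv
            have := hspec v hv
            omega
          have he : n - k - (m-1) = n + 1 - k - m := by omega
          rw [he] at hbnd
          calc 2 ^ k * (q - 1) ^ k * q ^ (n + 1 - k - m)
              ≤ suppCard q n (slice f i a₀) := hbnd
            _ ≤ ∑ a : ZMod q, suppCard q n (slice f i a) :=
                Finset.single_le_sum (f := fun a => suppCard q n (slice f i a))
                  (fun a _ => Nat.zero_le _) (Finset.mem_univ a₀)
            _ = suppCard q (n + 1) f := hsum.symm

end UP

theorem stmt7 (q n k m : ℕ) [NeZero q] (hq : 3 ≤ q) (hkm : k + m ≤ n)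
    (f : (Fin n → ZMod q) → ℂ) (hf : f ≠ 0)
    (hcoef : ∀ u : Fin n → ZMod q, fhat q n f u ≠ 0 →
      k ≤ hammingNorm u ∧ hammingNorm u ≤ m) :
    2 ^ k * (q - 1) ^ k * q ^ (n - k - m) ≤ suppCard q n f :=
  UP.main hq n k m f hkm hf hcoef
end

section
/- Let q ≥ 3, 1 ≤ d′ ≤ d ≤ n with d′ + d ≤ n + 1, and let f : (ℤ_q)^n → {−1,1} be a Boolean function whose Fourier coefficients f̂(u) vanish unless |u| = 0 or d′ ≤ |u| ≤ d. Then for every relevant coordinate i of f, the sum over pairs a < b in ℤ_q of the support sizes |S(f_{i,a,b})| is at least 2^{d′−1} · (q−1)^{d′} · q^{n−d′−d+1}. -/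
open Finset BigOperators
open scoped Classical

namespace Stmt9Aux

noncomputable def PsiZ (q : ℕ) (j : ℤ) : ℂ :=
  Complex.exp (2 * Real.pi * Complex.I * (j : ℂ) / q)

lemma PsiZ_congr (q : ℕ) [NeZero q] {a b : ℤ} (h : a % q = b % q) :
    PsiZ q a = PsiZ q b := by
  obtain ⟨t, ht⟩ : (q:ℤ) ∣ (a - b) := Int.ModEq.dvd (Int.ModEq.symm h)
  have hq : (q:ℂ) ≠ 0 := by exact_mod_cast (NeZero.ne q)
  have ha : (a:ℂ) = (b:ℂ) + (q:ℂ) * (t:ℂ) := by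
    have : (a:ℤ) = b + q * t := by linarith [ht]
    exact_mod_cast congrArg (fun z : ℤ => (z:ℂ)) this
  unfold PsiZ
  rw [ha]
  rw [show 2 * Real.pi * Complex.I * ((b:ℂ) + (q:ℂ)*(t:ℂ)) / q
      = 2 * Real.pi * Complex.I * (b:ℂ) / q + (t:ℂ) * (2 * Real.pi * Complex.I) by
    field_simp]
  rw [Complex.exp_add, Complex.exp_int_mul_two_pi_mul_I, mul_one]

lemma PsiZ_add (q : ℕ) (a b : ℤ) : PsiZ q (a + b) = PsiZ q a * PsiZ q b := by
  unfold PsiZ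
  rw [← Complex.exp_add]
  congr 1
  push_cast
  ring

lemma PsiZ_zero (q : ℕ) : PsiZ q 0 = 1 := by simp [PsiZ]

noncomputable def psi (q : ℕ) (s : ZMod q) : ℂ := PsiZ q (s.val : ℤ)

lemma psi_add (q : ℕ) [NeZero q] (s t : ZMod q) : psi q (s + t) = psi q s * psi q t := by
  rw [psi, psi, psi, ← PsiZ_add]
  apply PsiZ_congr
  have h := ZMod.val_add s t
  have hq : 0 < q := Nat.pos_of_ne_zero (NeZero.ne q)
  push_cast [h]
  exact Int.emod_emod_of_dvd _ dvd_rfl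

lemma psi_zero (q : ℕ) : psi q 0 = 1 := by
  simp [psi, ZMod.val_zero, PsiZ_zero]

lemma conj_psi (q : ℕ) [NeZero q] (s : ZMod q) :
    (starRingEnd ℂ) (psi q s) = psi q (-s) := by
  have h1 : (starRingEnd ℂ) (psi q s) = PsiZ q (-(s.val : ℤ)) := by
    unfold psi PsiZ
    rw [← Complex.exp_conj]
    congr 1
    simp only [map_div₀, map_mul, Complex.conj_I, Complex.conj_ofReal, map_ofNat,
      Complex.conj_natCast, map_intCast]
    push_cast
    ring
  rw [h1, psi]
  apply PsiZ_congr
  by_cases hs : s = 0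
  · simp [hs]
  · have h : (-s).val = q - s.val := by rw [ZMod.neg_val]; simp [hs]
    rw [h]
    have hv : s.val ≤ q := le_of_lt (ZMod.val_lt s)
    rw [Nat.cast_sub hv]
    have : (q:ℤ) - (s.val:ℤ) = -(s.val:ℤ) + (q:ℤ) * 1 := by ring
    rw [this, Int.add_mul_emod_self_left]

lemma PsiZ_nat_eq_one (q : ℕ) [NeZero q] (v : ℕ) (hv : v < q) (h : PsiZ q (v:ℤ) = 1) :
    v = 0 := by
  unfold PsiZ at h
  rw [Complex.exp_eq_one_iff] at h
  obtain ⟨k, hk⟩ := h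
  have hq : (q:ℂ) ≠ 0 := by exact_mod_cast (NeZero.ne q)
  have h2pi : (2 : ℂ) * Real.pi * Complex.I ≠ 0 := by
    simp [Real.pi_ne_zero, Complex.I_ne_zero]
  rw [div_eq_iff hq] at hk
  have h2 : (v:ℂ) = (k:ℂ) * q := by
    apply mul_left_cancel₀ h2pi
    push_cast at hk ⊢
    linear_combination hk
  have h3 : (v:ℤ) = k * q := by exact_mod_cast h2
  rcases le_or_gt k 0 with hk0 | hk0
  · nlinarith [Int.ofNat_nonneg v]
  · nlinarith [Int.ofNat_nonneg v]

lemma psi_eq_one_iff (q : ℕ) [NeZero q] (s : ZMod q) : psi q s = 1 ↔ s = 0 := by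
  constructor
  · intro h
    have := PsiZ_nat_eq_one q s.val (ZMod.val_lt s) h
    exact (ZMod.val_eq_zero s).mp this
  · intro h; rw [h, psi_zero]

lemma sum_psi (q : ℕ) [NeZero q] (c : ZMod q) :
    ∑ s : ZMod q, psi q (c * s) = if c = 0 then (q : ℂ) else 0 := by
  split_ifs with hc
  · simp [hc, psi_zero, ZMod.card]
  · have key : psi q c * ∑ s : ZMod q, psi q (c * s) = ∑ s : ZMod q, psi q (c * s) := by
      rw [Finset.mul_sum]
      rw [← Equiv.sum_comp (Equiv.addRight (1 : ZMod q)) (fun s => psi q (c * s))]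
      apply Finset.sum_congr rfl
      intro s _
      simp only [Equiv.coe_addRight]
      rw [mul_add, psi_add, mul_one, mul_comm]
    have hne : psi q c ≠ 1 := fun h => hc ((psi_eq_one_iff q c).mp h)
    have h0 : (psi q c - 1) * ∑ s : ZMod q, psi q (c * s) = 0 := by
      linear_combination key
    rcases mul_eq_zero.mp h0 with h | h
    · exact absurd (by linear_combination h) hne
    · exact h

variable {q : ℕ} [NeZero q]

lemma chi_eq (n : ℕ) (u x : Fin n → ZMod q) : chi q n u x = psi q (∑ i, u i * x i) := rfl

lemma psi_sum {α : Type*} (s : Finset α) (f : α → ZMod q) :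
    psi q (∑ a ∈ s, f a) = ∏ a ∈ s, psi q (f a) := by
  classical
  induction s using Finset.induction_on with
  | empty => simp [psi_zero]
  | @insert a s h ih => rw [Finset.sum_insert h, Finset.prod_insert h, psi_add, ih]

lemma inner_insertNth_left {n : ℕ} (i : Fin (n + 1)) (c : ZMod q) (v : Fin n → ZMod q)
    (x : Fin (n + 1) → ZMod q) :
    ∑ j, (i.insertNth (α := fun _ => ZMod q) c v) j * x j = c * x i + ∑ j, v j * x (i.succAbove j) := by
  rw [Fin.sum_univ_succAbove (fun j => (i.insertNth (α := fun _ => ZMod q) c v) j * x j) i]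
  simp only [Fin.insertNth_apply_same]
  congr 1
  apply Finset.sum_congr rfl
  intro j _
  rw [Fin.insertNth_apply_succAbove]

lemma inner_insertNth_both {n : ℕ} (i : Fin (n + 1)) (c b : ZMod q) (v y : Fin n → ZMod q) :
    ∑ j, (i.insertNth (α := fun _ => ZMod q) c v) j * (i.insertNth (α := fun _ => ZMod q) b y) j = c * b + ∑ j, v j * y j := by
  rw [inner_insertNth_left, Fin.insertNth_apply_same]
  congr 1
  apply Finset.sum_congr rfl
  intro j _
  rw [Fin.insertNth_apply_succAbove]

/-- sum over field of phase, coefficient on right -/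
lemma sum_psi' (c : ZMod q) : ∑ s : ZMod q, psi q (s * c) = if c = 0 then (q : ℂ) else 0 := by
  rw [← sum_psi q c]
  apply Finset.sum_congr rfl
  intro s _
  rw [mul_comm]

lemma sum_psi_inner {n : ℕ} (w : Fin n → ZMod q) (hw : w ≠ 0) :
    ∑ u : Fin n → ZMod q, psi q (∑ i, u i * w i) = 0 := by
  induction n with
  | zero => exact absurd (funext fun j => j.elim0) hw
  | succ n ih =>
    obtain ⟨i, hi⟩ : ∃ i, w i ≠ 0 := by
      by_contra h
      push_neg at h
      exact hw (funext h)
    rw [← Equiv.sum_comp (Fin.insertNthEquiv (fun _ => ZMod q) i)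
      (fun u => psi q (∑ j, u j * w j))]
    rw [Fintype.sum_prod_type]
    have hterm : ∀ (c : ZMod q) (v : Fin n → ZMod q),
        psi q (∑ j, (Fin.insertNthEquiv (fun _ => ZMod q) i (c, v)) j * w j)
        = psi q (c * w i) * psi q (∑ j, v j * w (i.succAbove j)) := by
      intro c v
      rw [show (Fin.insertNthEquiv (fun _ => ZMod q) i (c, v)) = i.insertNth c v from rfl]
      rw [inner_insertNth_left, psi_add]
    simp only [hterm]
    rw [← Finset.sum_mul_sum]
    have h1 : ∑ c : ZMod q, psi q (c * w i) = 0 := by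
      rw [sum_psi' (w i)]; simp [hi]
    rw [h1, zero_mul]

lemma sum_chi_conj_chi {n : ℕ} (x y : Fin n → ZMod q) :
    ∑ u : Fin n → ZMod q, chi q n u x * (starRingEnd ℂ) (chi q n u y)
      = if x = y then (q : ℂ) ^ n else 0 := by
  have hterm : ∀ u : Fin n → ZMod q, chi q n u x * (starRingEnd ℂ) (chi q n u y)
      = psi q (∑ i, u i * (x i - y i)) := by
    intro u
    rw [chi_eq, chi_eq, conj_psi, ← psi_add]
    congr 1
    rw [← Finset.sum_neg_distrib, ← Finset.sum_add_distrib]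
    apply Finset.sum_congr rfl
    intro j _
    ring
  simp only [hterm]
  split_ifs with hxy
  · subst hxy
    simp only [sub_self, mul_zero, Finset.sum_const_zero, psi_zero]
    simp [Finset.card_univ, ZMod.card]
  · have hw : (fun i => x i - y i) ≠ 0 := by
      intro h
      apply hxy
      funext j
      have := congrFun h j
      simpa [sub_eq_zero] using this
    exact sum_psi_inner _ hw

lemma inversion {n : ℕ} (g : (Fin n → ZMod q) → ℂ) (x : Fin n → ZMod q) :
    g x = ∑ u, fhat q n g u * chi q n u x := by
  have hq : (q:ℂ) ≠ 0 := by exact_mod_cast (NeZero.ne q)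
  unfold fhat
  have step1 : ∀ u : Fin n → ZMod q,
      (1/(q:ℂ)^n * ∑ y, g y * (starRingEnd ℂ) (chi q n u y)) * chi q n u x
      = ∑ y, 1/(q:ℂ)^n * (g y * (chi q n u x * (starRingEnd ℂ) (chi q n u y))) := by
    intro u
    rw [mul_comm, Finset.mul_sum, Finset.mul_sum]
    apply Finset.sum_congr rfl
    intro y _
    ring
  simp only [step1]
  rw [Finset.sum_comm]
  have step2 : ∀ y, (∑ u : Fin n → ZMod q,
      1/(q:ℂ)^n * (g y * (chi q n u x * (starRingEnd ℂ) (chi q n u y))))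
      = 1/(q:ℂ)^n * (g y * (if x = y then (q:ℂ)^n else 0)) := by
    intro y
    rw [← Finset.mul_sum, ← Finset.mul_sum, sum_chi_conj_chi]
  simp only [step2]
  simp only [mul_ite, mul_zero]
  rw [Finset.sum_ite_eq univ x (fun y => 1/(q:ℂ)^n * (g y * (q:ℂ)^n))]
  simp only [Finset.mem_univ, if_true]
  field_simp

lemma eq_zero_of_fhat_eq_zero {n : ℕ} (g : (Fin n → ZMod q) → ℂ)
    (h : ∀ u, fhat q n g u = 0) : g = 0 := by
  funext x
  rw [Pi.zero_apply, inversion g x]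
  simp [h]

lemma chi_ins {n : ℕ} (i : Fin (n + 1)) (c b : ZMod q) (v y : Fin n → ZMod q) :
    chi q (n+1) (i.insertNth c v) (i.insertNth b y) = psi q (c * b) * chi q n v y := by
  rw [chi_eq, chi_eq, inner_insertNth_both, psi_add]

lemma fhat_sub {n : ℕ} (g1 g2 : (Fin n → ZMod q) → ℂ) (v : Fin n → ZMod q) :
    fhat q n (fun y => g1 y - g2 y) v = fhat q n g1 v - fhat q n g2 v := by
  unfold fhat
  rw [← mul_sub, ← Finset.sum_sub_distrib]
  congr 1
  apply Finset.sum_congr rfl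
  intro y _
  ring

lemma fhat_res {n : ℕ} (g : (Fin (n+1) → ZMod q) → ℂ) (i : Fin (n+1)) (a : ZMod q)
    (v : Fin n → ZMod q) :
    fhat q n (fun y => g (i.insertNth a y)) v
      = ∑ c : ZMod q, fhat q (n+1) g (i.insertNth c v) * psi q (c * a) := by
  have hq : (q:ℂ) ≠ 0 := by exact_mod_cast (NeZero.ne q)
  unfold fhat
  have step1 : ∀ c : ZMod q,
      (1/(q:ℂ)^(n+1) * ∑ x, g x * (starRingEnd ℂ) (chi q (n+1) (i.insertNth c v) x)) * psi q (c*a)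
      = ∑ x, 1/(q:ℂ)^(n+1) * (g x * (starRingEnd ℂ) (chi q (n+1) (i.insertNth c v) x) * psi q (c*a)) := by
    intro c
    rw [mul_comm, Finset.mul_sum, Finset.mul_sum]
    apply Finset.sum_congr rfl
    intro x _
    ring
  simp only [step1]
  rw [Finset.sum_comm]
  have step2 : ∀ x, (∑ c : ZMod q,
      1/(q:ℂ)^(n+1) * (g x * (starRingEnd ℂ) (chi q (n+1) (i.insertNth c v) x) * psi q (c*a)))
      = 1/(q:ℂ)^(n+1) * (g x * ((starRingEnd ℂ) (chi q n v (i.removeNth x))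
          * (if a = x i then (q:ℂ) else 0))) := by
    intro x
    have hx : x = i.insertNth (x i) (i.removeNth x) := (Fin.insertNth_self_removeNth i x).symm
    have hchi : ∀ c : ZMod q, (starRingEnd ℂ) (chi q (n+1) (i.insertNth c v) x)
        = psi q (-(c * x i)) * (starRingEnd ℂ) (chi q n v (i.removeNth x)) := by
      intro c
      conv_lhs => rw [hx]
      rw [chi_ins, map_mul, conj_psi]
    simp only [hchi]
    rw [← Finset.mul_sum]
    congr 1
    have hterm : ∀ c : ZMod q,
        g x * (psi q (-(c * x i)) * (starRingEnd ℂ) (chi q n v (i.removeNth x))) * psi q (c * a)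
        = g x * (starRingEnd ℂ) (chi q n v (i.removeNth x)) * psi q (c * (a - x i)) := by
      intro c
      have h1 : psi q (-(c * x i)) * psi q (c * a) = psi q (c * (a - x i)) := by
        rw [← psi_add]
        congr 1
        ring
      calc g x * (psi q (-(c * x i)) * (starRingEnd ℂ) (chi q n v (i.removeNth x))) * psi q (c * a)
          = g x * (starRingEnd ℂ) (chi q n v (i.removeNth x))
            * (psi q (-(c * x i)) * psi q (c * a)) := by ring
        _ = _ := by rw [h1]
    simp only [hterm]
    rw [← Finset.mul_sum, sum_psi' (a - x i), mul_assoc]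
    congr 2
    by_cases hab : a = x i
    · rw [if_pos hab, if_pos (sub_eq_zero.mpr hab)]
    · rw [if_neg hab, if_neg (fun h => hab (sub_eq_zero.mp h))]
  simp only [step2]
  rw [← Equiv.sum_comp (Fin.insertNthEquiv (fun _ => ZMod q) i)
    (fun x => 1/(q:ℂ)^(n+1) * (g x * ((starRingEnd ℂ) (chi q n v (i.removeNth x))
      * (if a = x i then (q:ℂ) else 0))))]
  rw [Fintype.sum_prod_type]
  have step3 : ∀ (b : ZMod q) (y : Fin n → ZMod q),
      (1/(q:ℂ)^(n+1) * (g (Fin.insertNthEquiv (fun _ => ZMod q) i (b, y))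
        * ((starRingEnd ℂ) (chi q n v (i.removeNth (Fin.insertNthEquiv (fun _ => ZMod q) i (b, y))))
        * (if a = (Fin.insertNthEquiv (fun _ => ZMod q) i (b, y)) i then (q:ℂ) else 0))))
      = if a = b then 1/(q:ℂ)^(n+1) * (g (i.insertNth b y)
          * ((starRingEnd ℂ) (chi q n v y) * q)) else 0 := by
    intro b y
    rw [show (Fin.insertNthEquiv (fun _ => ZMod q) i (b, y)) = i.insertNth b y from rfl]
    rw [Fin.insertNth_apply_same, Fin.removeNth_insertNth]
    by_cases hab : a = b
    · rw [if_pos hab, if_pos hab]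
    · rw [if_neg hab, if_neg hab, mul_zero, mul_zero, mul_zero]
  simp only [step3]
  have step4 : ∀ b : ZMod q, (∑ y : Fin n → ZMod q, if a = b
      then 1/(q:ℂ)^(n+1) * (g (i.insertNth b y) * ((starRingEnd ℂ) (chi q n v y) * q)) else 0)
      = if a = b then ∑ y : Fin n → ZMod q,
          1/(q:ℂ)^(n+1) * (g (i.insertNth b y) * ((starRingEnd ℂ) (chi q n v y) * q)) else 0 := by
    intro b
    split_ifs <;> simp
  simp only [step4]
  rw [Finset.sum_ite_eq univ a (fun b => ∑ y : Fin n → ZMod q,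
    1/(q:ℂ)^(n+1) * (g (i.insertNth b y) * ((starRingEnd ℂ) (chi q n v y) * q)))]
  simp only [Finset.mem_univ, if_true]
  rw [Finset.mul_sum]
  apply Finset.sum_congr rfl
  intro y _
  rw [pow_succ]
  field_simp

lemma sum_fhat_res {n : ℕ} (g : (Fin (n+1) → ZMod q) → ℂ) (i : Fin (n+1))
    (v : Fin n → ZMod q) :
    ∑ a : ZMod q, fhat q n (fun y => g (i.insertNth a y)) v
      = (q : ℂ) * fhat q (n+1) g (i.insertNth 0 v) := by
  simp only [fhat_res g i _ v]
  rw [Finset.sum_comm]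
  have : ∀ c : ZMod q, (∑ a : ZMod q, fhat q (n+1) g (i.insertNth c v) * psi q (c * a))
      = fhat q (n+1) g (i.insertNth c v) * (if c = 0 then (q:ℂ) else 0) := by
    intro c
    rw [← Finset.mul_sum, sum_psi q c]
  simp only [this]
  simp only [mul_ite, mul_zero]
  rw [Finset.sum_ite_eq' univ (0 : ZMod q)
    (fun c => fhat q (n+1) g (i.insertNth c v) * (q:ℂ))]
  simp only [Finset.mem_univ, if_true]
  ring

lemma hammingNorm_insertNth {n : ℕ} (i : Fin (n + 1)) (c : ZMod q) (v : Fin n → ZMod q) :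
    hammingNorm (i.insertNth (α := fun _ => ZMod q) c v)
      = hammingNorm v + (if c = 0 then 0 else 1) := by
  unfold hammingNorm
  rw [Finset.card_filter, Finset.card_filter]
  rw [Fin.sum_univ_succAbove
    (fun j => if (i.insertNth (α := fun _ => ZMod q) c v) j ≠ 0 then 1 else 0) i]
  rw [Fin.insertNth_apply_same]
  simp only [Fin.insertNth_apply_succAbove]
  rw [add_comm]
  congr 1
  by_cases hc : c = 0 <;> simp [hc]

lemma suppCard_decomp {n : ℕ} (g : (Fin (n+1) → ZMod q) → ℂ) (i : Fin (n+1)) :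
    suppCard q (n+1) g = ∑ a : ZMod q, suppCard q n (fun y => g (i.insertNth a y)) := by
  unfold suppCard
  rw [Finset.card_filter]
  rw [← Equiv.sum_comp (Fin.insertNthEquiv (fun _ => ZMod q) i)
    (fun x => if g x ≠ 0 then 1 else 0)]
  rw [Fintype.sum_prod_type]
  apply Finset.sum_congr rfl
  intro a _
  rw [Finset.card_filter]
  apply Finset.sum_congr rfl
  intro y _
  rfl

lemma suppCard_sub_le {n : ℕ} (g1 g2 : (Fin n → ZMod q) → ℂ) :
    suppCard q n (fun y => g1 y - g2 y) ≤ suppCard q n g1 + suppCard q n g2 := by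
  unfold suppCard
  refine le_trans (Finset.card_le_card ?_) (Finset.card_union_le _ _)
  intro y hy
  simp only [Finset.mem_filter, Finset.mem_univ, true_and, Finset.mem_union] at hy ⊢
  by_contra h
  push_neg at h
  rw [h.1, h.2, sub_zero] at hy
  exact hy rfl


lemma fhat_zero_fn {n : ℕ} (g : (Fin n → ZMod q) → ℂ) (hg : ∀ y, g y = 0) (v : Fin n → ZMod q) :
    fhat q n g v = 0 := by
  unfold fhat
  simp [hg]

lemma fhat_const_at_zero {n : ℕ} (g : (Fin n → ZMod q) → ℂ) (c₀ : ℂ) (hg : ∀ x, g x = c₀) :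
    fhat q n g 0 = c₀ := by
  have hq : (q:ℂ) ≠ 0 := by exact_mod_cast (NeZero.ne q)
  unfold fhat
  have : ∀ x : Fin n → ZMod q, g x * (starRingEnd ℂ) (chi q n 0 x) = c₀ := by
    intro x
    have : chi q n 0 x = 1 := by
      show psi q (∑ i, (0:ZMod q) * x i) = 1
      simp [psi_zero]
    rw [this, map_one, mul_one, hg]
  simp only [this]
  rw [Finset.sum_const, Finset.card_univ]
  have hcard : Fintype.card (Fin n → ZMod q) = q ^ n := by
    rw [Fintype.card_fun, ZMod.card, Fintype.card_fin]
  rw [hcard]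
  simp
  field_simp

lemma const_of_restr {n : ℕ} (g : (Fin (n+1) → ZMod q) → ℂ)
    (h : ∀ (i : Fin (n+1)) (a b : ZMod q) (z : Fin n → ZMod q),
      g (i.insertNth a z) = g (i.insertNth b z)) :
    ∀ x y, g x = g y := by
  have key : ∀ (d : ℕ) (x y : Fin (n+1) → ZMod q), hammingDist x y ≤ d → g x = g y := by
    intro d
    induction d with
    | zero =>
      intro x y hd
      have : x = y := hammingDist_eq_zero.mp (Nat.le_antisymm hd (Nat.zero_le _))
      rw [this]
    | succ d ih =>
      intro x y hd
      by_cases hxy : x = y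
      · rw [hxy]
      · obtain ⟨i, hi⟩ : ∃ i, x i ≠ y i := by
          by_contra hc
          push_neg at hc
          exact hxy (funext hc)
        set x' := Function.update x i (y i) with hx'def
        have hx'eq : x' = i.insertNth (y i) (i.removeNth x) := by
          funext j
          by_cases hj : j = i
          · subst hj
            rw [hx'def, Function.update_self, Fin.insertNth_apply_same]
          · obtain ⟨l, hl⟩ := Fin.exists_succAbove_eq hj
            rw [hx'def, Function.update_of_ne hj, ← hl, Fin.insertNth_apply_succAbove]
            rfl
        have h1 : g x = g x' := by
          conv_lhs => rw [← Fin.insertNth_self_removeNth i x]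
          rw [hx'eq]
          exact h i (x i) (y i) (i.removeNth x)
        have h2 : hammingDist x' y ≤ d := by
          have hsub : (univ.filter (fun j => x' j ≠ y j))
              ⊆ (univ.filter (fun j => x j ≠ y j)).erase i := by
            intro j hj
            simp only [Finset.mem_filter, Finset.mem_univ, true_and] at hj
            rw [Finset.mem_erase]
            constructor
            · intro hji
              subst hji
              exact hj (by rw [hx'def, Function.update_self])
            · simp only [Finset.mem_filter, Finset.mem_univ, true_and]
              intro hxj
              apply hj
              by_cases hji : j = i
              · subst hji; rw [hx'def, Function.update_self]
              · rw [hx'def, Function.update_of_ne hji, hxj]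
          have hmem : i ∈ univ.filter (fun j => x j ≠ y j) := by
            simp only [Finset.mem_filter, Finset.mem_univ, true_and]
            exact hi
          have := Finset.card_le_card hsub
          rw [Finset.card_erase_of_mem hmem] at this
          have hcard : hammingDist x y = (univ.filter (fun j => x j ≠ y j)).card := rfl
          have hcard' : hammingDist x' y = (univ.filter (fun j => x' j ≠ y j)).card := rfl
          omega
        rw [h1]
        exact ih x' y h2
  intro x y
  exact key (hammingDist x y) x y le_rfl

lemma arith_main (q p s σ0 S : ℕ) (hq : 2 ≤ q) (hp1 : 1 ≤ p) (hp2 : p + 1 ≤ q)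
    (hs : σ0 ≤ s) (hS1 : q * s ≤ S) (hS2 : p * s + (q - p) * (q * σ0 - s) ≤ S) :
    2 * (q - 1) * σ0 ≤ S := by
  have c1 : (q:ℤ) * s ≤ S := by exact_mod_cast hS1
  have c2 : (σ0:ℤ) ≤ s := by exact_mod_cast hs
  have c3 : (2:ℤ) ≤ q := by exact_mod_cast hq
  have c6 : (1:ℤ) ≤ p := by exact_mod_cast hp1
  have c7 : (p:ℤ) + 1 ≤ q := by exact_mod_cast hp2
  have hσ : (0:ℤ) ≤ σ0 := by positivity
  rcases le_or_gt (q * σ0) (2 * s) with hcase | hcase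
  · have c4 : (q:ℤ) * σ0 ≤ 2 * s := by exact_mod_cast hcase
    zify [show 1 ≤ q by omega]
    nlinarith [mul_nonneg (sq_nonneg ((q:ℤ) - 2)) hσ,
      mul_nonneg (by linarith : (0:ℤ) ≤ 2*(s:ℤ) - q*σ0) (by linarith : (0:ℤ) ≤ (q:ℤ))]
  · have hqs : s ≤ q * σ0 := by omega
    have c5 : (p:ℤ)*s + ((q:ℤ) - p)*((q:ℤ)*σ0 - s) ≤ S := by
      zify [hqs, show p ≤ q by omega] at hS2
      exact hS2
    have c4 : 2 * (s:ℤ) < q * σ0 := by exact_mod_cast hcase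
    zify [show 1 ≤ q by omega]
    rcases le_or_gt (q:ℤ) (2 * p) with hp | hp
    · nlinarith [mul_nonneg (by linarith : (0:ℤ) ≤ (s:ℤ) - σ0) (by linarith : (0:ℤ) ≤ 2*(p:ℤ) - q),
        mul_nonneg (mul_nonneg (by linarith : (0:ℤ) ≤ (q:ℤ) - 1 - p)
          (by linarith : (0:ℤ) ≤ (q:ℤ) - 2)) hσ]
    · nlinarith [mul_nonneg (by linarith : (0:ℤ) ≤ (q:ℤ) - p)
          (by linarith : (0:ℤ) ≤ (q:ℤ)*σ0 - 2*s),
        mul_nonneg (mul_nonneg (by linarith : (0:ℤ) ≤ (q:ℤ) - 2)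
          (by linarith : (0:ℤ) ≤ (q:ℤ) - 2 - p)) hσ,
        mul_nonneg (by linarith : (0:ℤ) ≤ (s:ℤ) - σ0) (by linarith : (0:ℤ) ≤ (p:ℤ))]

theorem supp_lower (hq : 2 ≤ q) :
    ∀ n k m (g : (Fin n → ZMod q) → ℂ), k ≤ m → k + m ≤ n → g ≠ 0 →
    (∀ v, fhat q n g v ≠ 0 → k ≤ hammingNorm v ∧ hammingNorm v ≤ m) →
    2^k * (q-1)^k * q^(n - k - m) ≤ suppCard q n g := by
  intro n
  induction n using Nat.strong_induction_on with
  | _ n IH =>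
  intro k m g hkm hkmn hg hband
  obtain ⟨x0, hx0⟩ : ∃ x, g x ≠ 0 := by
    by_contra hc; push_neg at hc; exact hg (funext hc)
  by_cases hconst : ∀ x y, g x = g y
  · -- constant case
    have hk0 : k = 0 := by
      have h0 : fhat q n g 0 = g x0 := fhat_const_at_zero g (g x0) (fun x => hconst x x0)
      have := (hband 0 (by rw [h0]; exact hx0)).1
      simpa [hammingNorm_zero] using this
    subst hk0
    have hsupp : suppCard q n g = q ^ n := by
      unfold suppCard
      rw [Finset.filter_true_of_mem (fun y _ => by rw [hconst y x0]; exact hx0)]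
      rw [Finset.card_univ, Fintype.card_fun, ZMod.card, Fintype.card_fin]
    rw [hsupp]
    simp only [pow_zero, one_mul]
    exact Nat.pow_le_pow_right (by omega) (by omega)
  push_neg at hconst
  obtain ⟨x1, y1, hne⟩ := hconst
  have hn : n ≠ 0 := by
    rintro rfl
    exact hne (congrArg g (funext fun j => j.elim0))
  obtain ⟨n', rfl⟩ : ∃ n', n = n' + 1 := ⟨n - 1, by omega⟩
  have hcoord : ∃ (i : Fin (n'+1)) (a b : ZMod q) (z : Fin n' → ZMod q),
      g (i.insertNth a z) ≠ g (i.insertNth b z) := by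
    by_contra hc
    push_neg at hc
    exact hne (const_of_restr g hc x1 y1)
  obtain ⟨i, a0, b0, z0, hz0⟩ := hcoord
  set G : ZMod q → (Fin n' → ZMod q) → ℂ := fun a y => g (i.insertNth a y) with hGdef
  have hbandG : ∀ (a : ZMod q) (v : Fin n' → ZMod q), fhat q n' (G a) v ≠ 0 →
      k ≤ hammingNorm v + 1 ∧ hammingNorm v ≤ m := by
    intro a v hv
    rw [show G a = (fun y => g (i.insertNth a y)) from rfl, fhat_res] at hv
    obtain ⟨c, -, hc⟩ := Finset.exists_ne_zero_of_sum_ne_zero hv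
    have h1 : fhat q (n'+1) g (i.insertNth c v) ≠ 0 := fun h => hc (by rw [h, zero_mul])
    have h2 := hband _ h1
    rw [hammingNorm_insertNth] at h2
    have hite : (if c = 0 then 0 else 1) ≤ 1 := by split_ifs <;> omega
    omega
  have hbandDiff : ∀ (a b : ZMod q) (v : Fin n' → ZMod q),
      fhat q n' (fun y => G a y - G b y) v ≠ 0 →
      k ≤ hammingNorm v + 1 ∧ hammingNorm v + 1 ≤ m := by
    intro a b v hv
    rw [fhat_sub, show G a = (fun y => g (i.insertNth a y)) from rfl,
      show G b = (fun y => g (i.insertNth b y)) from rfl, fhat_res, fhat_res,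
      ← Finset.sum_sub_distrib] at hv
    obtain ⟨c, -, hc⟩ := Finset.exists_ne_zero_of_sum_ne_zero hv
    have hc0 : c ≠ 0 := by
      rintro rfl
      simp at hc
    have h1 : fhat q (n'+1) g (i.insertNth c v) ≠ 0 := by
      intro h
      apply hc
      rw [h]
      ring
    have h2 := hband _ h1
    rw [hammingNorm_insertNth, if_neg hc0] at h2
    exact h2
  have hdec : suppCard q (n'+1) g = ∑ a : ZMod q, suppCard q n' (G a) :=
    suppCard_decomp g i
  rcases Nat.eq_zero_or_pos k with hk0 | hkpos
  · -- k = 0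
    subst hk0
    have hdne : (fun y => G a0 y - G b0 y) ≠ 0 := by
      intro h
      have := congrFun h z0
      rw [Pi.zero_apply, sub_eq_zero] at this
      exact hz0 this
    have hm1 : 1 ≤ m := by
      by_contra h0
      push_neg at h0
      apply hdne
      apply eq_zero_of_fhat_eq_zero
      intro v
      by_contra hv
      have := (hbandDiff a0 b0 v hv).2
      omega
    have hIHd := IH n' (by omega) 0 (m-1) (fun y => G a0 y - G b0 y) (by omega) (by omega) hdne
      (fun v hv => by have := hbandDiff a0 b0 v hv; omega)
    have hab : a0 ≠ b0 := by
      intro h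
      rw [h] at hz0
      exact hz0 rfl
    have hpair : suppCard q n' (G a0) + suppCard q n' (G b0)
        ≤ ∑ a : ZMod q, suppCard q n' (G a) := by
      calc suppCard q n' (G a0) + suppCard q n' (G b0)
          = ∑ a ∈ ({a0, b0} : Finset (ZMod q)), suppCard q n' (G a) :=
            (Finset.sum_pair (f := fun a => suppCard q n' (G a)) hab).symm
        _ ≤ _ := Finset.sum_le_sum_of_subset (Finset.subset_univ _)
    have hle := suppCard_sub_le (G a0) (G b0)
    have hexp : 2^0 * (q-1)^0 * q^((n'+1) - 0 - m) = 2^0 * (q-1)^0 * q^(n' - 0 - (m-1)) := by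
      congr 1
      congr 1
      omega
    rw [hdec, hexp]
    omega
  · -- k ≥ 1
    obtain ⟨k', rfl⟩ : ∃ k', k = k' + 1 := ⟨k - 1, by omega⟩
    by_cases hzero : ∃ b : ZMod q, G b = 0
    · obtain ⟨bz, hbz⟩ := hzero
      by_cases htwo : ∃ a1 a2 : ZMod q, a1 ≠ a2 ∧ G a1 ≠ 0 ∧ G a2 ≠ 0
      · -- two nonzero restrictions
        obtain ⟨a1, a2, h12, ha1, ha2⟩ := htwo
        have hbound : ∀ a : ZMod q, G a ≠ 0 →
            2^k' * (q-1)^k' * q^(n' - k' - (m-1)) ≤ suppCard q n' (G a) := by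
          intro a ha
          have hdiffeq : (fun y => G a y - G bz y) = G a := funext fun y => by
            rw [show G bz y = (0:ℂ) from congrFun hbz y, sub_zero]
          refine IH n' (by omega) k' (m-1) (G a) (by omega) (by omega) ha ?_
          intro v hv
          have := hbandDiff a bz v (by rw [hdiffeq]; exact hv)
          omega
        have hpair : suppCard q n' (G a1) + suppCard q n' (G a2)
            ≤ ∑ a : ZMod q, suppCard q n' (G a) := by
          calc suppCard q n' (G a1) + suppCard q n' (G a2)
              = ∑ a ∈ ({a1, a2} : Finset (ZMod q)), suppCard q n' (G a) :=
                (Finset.sum_pair (f := fun a => suppCard q n' (G a)) h12).symm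
            _ ≤ _ := Finset.sum_le_sum_of_subset (Finset.subset_univ _)
        have hTB : 2^(k'+1) * (q-1)^(k'+1) * q^((n'+1) - (k'+1) - m)
            ≤ 2 * (2^k' * (q-1)^k' * q^(n' - k' - (m-1))) := by
          have e1 : n' - k' - (m-1) = ((n'+1) - (k'+1) - m) + 1 := by omega
          rw [e1, pow_succ 2 k', pow_succ (q-1) k', pow_succ q ((n'+1) - (k'+1) - m)]
          calc 2 ^ k' * 2 * ((q-1)^k' * (q-1)) * q ^ ((n'+1) - (k'+1) - m)
              = (2^k' * (q-1)^k' * q^((n'+1) - (k'+1) - m) * (q-1)) * 2 := by ring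
            _ ≤ (2^k' * (q-1)^k' * q^((n'+1) - (k'+1) - m) * q) * 2 := by
                exact Nat.mul_le_mul_right _ (Nat.mul_le_mul_left _ (by omega))
            _ = 2 * (2^k' * (q-1)^k' * (q^((n'+1) - (k'+1) - m) * q)) := by ring
        have hb1 := hbound a1 ha1
        have hb2 := hbound a2 ha2
        rw [hdec]
        omega
      · -- exactly one nonzero restriction
        have hex : ∃ a : ZMod q, G a ≠ 0 := by
          refine ⟨x0 i, ?_⟩
          intro h
          apply hx0
          rw [← Fin.insertNth_self_removeNth i x0]
          exact congrFun h (i.removeNth x0)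
        obtain ⟨a1, ha1⟩ := hex
        have hone : ∀ b : ZMod q, b ≠ a1 → G b = 0 := by
          intro b hb
          by_contra hbne
          exact htwo ⟨a1, b, fun h => hb h.symm, ha1, hbne⟩
        haveI : Fact (1 < q) := ⟨hq⟩
        have hb1ne : a1 + 1 ≠ a1 := by
          intro h
          have : (1 : ZMod q) = 0 := by
            have := congrArg (fun t => t - a1) h
            simpa using this
          exact one_ne_zero this
        have hbz' : G (a1 + 1) = 0 := hone _ hb1ne
        have hbandH : ∀ v, fhat q n' (G a1) v ≠ 0 →
            (k'+1) ≤ hammingNorm v ∧ hammingNorm v + 1 ≤ m := by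
          intro v hv
          constructor
          · have hsum := sum_fhat_res g i v
            have hcollapse : ∑ a : ZMod q, fhat q n' (fun y => g (i.insertNth a y)) v
                = fhat q n' (G a1) v := by
              refine Finset.sum_eq_single a1 ?_ (fun h => absurd (Finset.mem_univ a1) h)
              intro b _ hb
              rw [show (fun y => g (i.insertNth b y)) = G b from rfl, hone b hb]
              exact fhat_zero_fn _ (fun y => rfl) v
            have heq : fhat q n' (G a1) v = (q:ℂ) * fhat q (n'+1) g (i.insertNth 0 v) := by
              rw [← hcollapse, hsum]
            have hne0 : fhat q (n'+1) g (i.insertNth 0 v) ≠ 0 := by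
              intro h
              apply hv
              rw [heq, h, mul_zero]
            have := (hband _ hne0).1
            rw [hammingNorm_insertNth, if_pos rfl, add_zero] at this
            exact this
          · have hdiffeq : (fun y => G a1 y - G (a1+1) y) = G a1 := funext fun y => by
              rw [show G (a1+1) y = (0:ℂ) from congrFun hbz' y, sub_zero]
            exact (hbandDiff a1 (a1+1) v (by rw [hdiffeq]; exact hv)).2
        have hkm1 : k' + 1 + 1 ≤ m := by
          by_contra h0
          push_neg at h0
          apply ha1
          apply eq_zero_of_fhat_eq_zero
          intro v
          by_contra hv
          have := hbandH v hv
          omega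
        have hIHH := IH n' (by omega) (k'+1) (m-1) (G a1) (by omega) (by omega) ha1
          (fun v hv => by have := hbandH v hv; omega)
        have hsingle : suppCard q n' (G a1) ≤ ∑ a : ZMod q, suppCard q n' (G a) :=
          Finset.single_le_sum (f := fun a => suppCard q n' (G a)) (fun a _ => Nat.zero_le _) (Finset.mem_univ a1)
        have hexp : 2^(k'+1) * (q-1)^(k'+1) * q^((n'+1) - (k'+1) - m)
            = 2^(k'+1) * (q-1)^(k'+1) * q^(n' - (k'+1) - (m-1)) := by
          congr 1
          congr 1
          omega
        rw [hdec, hexp]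
        omega
    · -- all restrictions nonzero
      push_neg at hzero
      obtain ⟨astar, -, hmin⟩ := Finset.exists_min_image Finset.univ
        (fun a => suppCard q n' (G a)) ⟨0, Finset.mem_univ 0⟩
      set s := suppCard q n' (G astar) with hsdef
      set σ0 := 2^k' * (q-1)^k' * q^(n' - k' - m) with hσ0def
      have hσ0s : σ0 ≤ s :=
        IH n' (by omega) k' m (G astar) (by omega) (by omega) (hzero astar)
          (fun v hv => by have := hbandG astar v hv; omega)
      have hBdef : ∀ a : ZMod q, G a ≠ G astar → q * σ0 - s ≤ suppCard q n' (G a) := by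
        intro a hne'
        have hdne : (fun y => G a y - G astar y) ≠ 0 := by
          intro h
          apply hne'
          funext y
          have := congrFun h y
          rw [Pi.zero_apply, sub_eq_zero] at this
          exact this
        have hIHd := IH n' (by omega) k' (m-1) (fun y => G a y - G astar y) (by omega)
          (by omega) hdne (fun v hv => by have := hbandDiff a astar v hv; omega)
        have hle := suppCard_sub_le (G a) (G astar)
        have hexp : 2^k' * (q-1)^k' * q^(n' - k' - (m-1)) = q * σ0 := by
          rw [hσ0def, show n' - k' - (m-1) = (n' - k' - m) + 1 by omega, pow_succ]
          ring
        omega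
      set C := Finset.univ.filter (fun a : ZMod q => G a = G astar) with hCdef
      have hcardq : Fintype.card (ZMod q) = q := ZMod.card q
      have hp1 : 1 ≤ C.card := Finset.card_pos.mpr ⟨astar, by simp [hCdef]⟩
      have hp2 : C.card + 1 ≤ q := by
        have hex : ∃ a : ZMod q, G a ≠ G astar := by
          by_cases h' : G a0 = G astar
          · refine ⟨b0, fun h => ?_⟩
            rw [← h] at h'
            exact hz0 (congrFun h' z0)
          · exact ⟨a0, h'⟩
        obtain ⟨aa, haa⟩ := hex
        have : C ⊂ Finset.univ := by
          refine Finset.ssubset_univ_iff.mpr ?_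
          intro h
          apply haa
          have := h ▸ Finset.mem_univ aa
          have := Finset.mem_filter.mp (h ▸ Finset.mem_univ aa)
          exact this.2
        have := Finset.card_lt_card this
        rw [Finset.card_univ, hcardq] at this
        omega
      have hS1 : q * s ≤ ∑ a : ZMod q, suppCard q n' (G a) := by
        have := Finset.card_nsmul_le_sum Finset.univ (fun a => suppCard q n' (G a)) s
          (fun a _ => hmin a (Finset.mem_univ a))
        rwa [Finset.card_univ, hcardq, smul_eq_mul] at this
      have hS2 : C.card * s + (q - C.card) * (q * σ0 - s)
          ≤ ∑ a : ZMod q, suppCard q n' (G a) := by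
        rw [← Finset.sum_filter_add_sum_filter_not Finset.univ
          (fun a : ZMod q => G a = G astar) (fun a => suppCard q n' (G a))]
        apply Nat.add_le_add
        · have := Finset.card_nsmul_le_sum C (fun a => suppCard q n' (G a)) s
            (fun a ha => by
              show s ≤ suppCard q n' (G a)
              rw [hCdef] at ha
              rw [(Finset.mem_filter.mp ha).2])
          rwa [smul_eq_mul] at this
        · have hcardC' : (Finset.univ.filter (fun a : ZMod q => ¬ G a = G astar)).card
              = q - C.card := by
            have := Finset.card_filter_add_card_filter_not
              (s := Finset.univ) (p := fun a : ZMod q => G a = G astar)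
            rw [Finset.card_univ, hcardq] at this
            rw [hCdef]
            omega
          have := Finset.card_nsmul_le_sum
            (Finset.univ.filter (fun a : ZMod q => ¬ G a = G astar))
            (fun a => suppCard q n' (G a)) (q * σ0 - s)
            (fun a ha => hBdef a (Finset.mem_filter.mp ha).2)
          rwa [hcardC', smul_eq_mul] at this
      have harith := arith_main q C.card s σ0 (∑ a : ZMod q, suppCard q n' (G a))
        hq hp1 hp2 hσ0s hS1 hS2
      have hexp : 2^(k'+1) * (q-1)^(k'+1) * q^((n'+1) - (k'+1) - m) = 2 * (q-1) * σ0 := by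
        rw [hσ0def, show (n'+1) - (k'+1) - m = n' - k' - m by omega, pow_succ, pow_succ]
        ring
      rw [hdec, hexp]
      omega

end Stmt9Aux

open Stmt9Aux in
theorem stmt9 (q n d d' : ℕ) [NeZero q] (hq : 3 ≤ q) (hd' : 1 ≤ d') (hdd : d' ≤ d)
    (hdn : d ≤ n + 1) (hsum : d' + d ≤ n + 2)
    (f : (Fin (n + 1) → ZMod q) → ℂ) (hbool : ∀ x, f x = 1 ∨ f x = -1)
    (hcoef : ∀ u : Fin (n + 1) → ZMod q, fhat q (n + 1) f u ≠ 0 →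
      hammingNorm u = 0 ∨ (d' ≤ hammingNorm u ∧ hammingNorm u ≤ d))
    (i : Fin (n + 1)) (hrel : Relevant f i) :
    2 ^ (d' - 1) * (q - 1) ^ d' * q ^ (n + 2 - d' - d)
      ≤ ∑ a : ZMod q, ∑ b ∈ univ.filter (fun b : ZMod q => a.val < b.val),
          suppCard q n (restrictDiff f i a b) := by
  -- witnesses of relevance
  obtain ⟨x, y, hagree, hxy⟩ := hrel
  have hremove : i.removeNth x = i.removeNth y := by
    funext j
    exact hagree (i.succAbove j) (Fin.succAbove_ne i j)
  set a0 := x i with ha0def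
  set b0 := y i with hb0def
  have hfa0b0 : (fun z => f (i.insertNth a0 z)) ≠ (fun z => f (i.insertNth b0 z)) := by
    intro h
    apply hxy
    have h1 := congrFun h (i.removeNth x)
    rw [Fin.insertNth_self_removeNth] at h1
    rw [hremove] at h1
    rw [Fin.insertNth_self_removeNth] at h1
    exact h1
  -- band of restrictDiff
  have hbandD : ∀ (a b : ZMod q) (v : Fin n → ZMod q),
      fhat q n (restrictDiff f i a b) v ≠ 0 →
      d' - 1 ≤ hammingNorm v ∧ hammingNorm v ≤ d - 1 := by
    intro a b v hv
    rw [show restrictDiff f i a b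
        = (fun z => (fun z => f (i.insertNth a z)) z - (fun z => f (i.insertNth b z)) z)
        from rfl] at hv
    rw [fhat_sub, fhat_res, fhat_res, ← Finset.sum_sub_distrib] at hv
    obtain ⟨c, -, hc⟩ := Finset.exists_ne_zero_of_sum_ne_zero hv
    have hc0 : c ≠ 0 := by
      rintro rfl
      simp at hc
    have h1 : fhat q (n+1) f (i.insertNth c v) ≠ 0 := by
      intro h
      apply hc
      rw [h]
      ring
    have h2 := hcoef _ h1
    rw [hammingNorm_insertNth, if_neg hc0] at h2
    rcases h2 with h2 | h2
    · omega
    · omega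
  -- diff nonzero iff restrictions differ
  have hdiff_ne : ∀ a b : ZMod q,
      (fun z => f (i.insertNth a z)) ≠ (fun z => f (i.insertNth b z)) →
      restrictDiff f i a b ≠ 0 := by
    intro a b hab h
    apply hab
    funext z
    have := congrFun h z
    rw [show restrictDiff f i a b z = f (i.insertNth a z) - f (i.insertNth b z) from rfl] at this
    rw [Pi.zero_apply, sub_eq_zero] at this
    exact this
  -- per-pair bound
  set T : ℕ := 2 ^ (d' - 1) * (q - 1) ^ (d' - 1) * q ^ (n + 2 - d' - d) with hTdef
  have hperpair : ∀ a b : ZMod q, restrictDiff f i a b ≠ 0 →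
      T ≤ suppCard q n (restrictDiff f i a b) := by
    intro a b hne
    have := supp_lower (by omega) n (d'-1) (d-1) (restrictDiff f i a b)
      (by omega) (by omega) hne (hbandD a b)
    have hexp : n - (d'-1) - (d-1) = n + 2 - d' - d := by omega
    rw [hexp] at this
    exact this
  -- the set of good pairs
  set D : Finset (ZMod q × ZMod q) := univ.filter (fun p : ZMod q × ZMod q =>
    p.1.val < p.2.val ∧ restrictDiff f i p.1 p.2 ≠ 0) with hDdef
  have hcardD : q - 1 ≤ D.card := by
    classical
    set F : ZMod q → (Fin n → ZMod q) → ℂ := fun a z => f (i.insertNth a z) with hF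
    have hFne : F a0 ≠ F b0 := hfa0b0
    set sortp : ZMod q → ZMod q → ZMod q × ZMod q :=
      fun u v => if u.val < v.val then (u, v) else (v, u) with hsort
    set φ : ZMod q → ZMod q × ZMod q :=
      fun c => if F c ≠ F a0 then sortp c a0 else sortp c b0 with hφ
    have hvalne : ∀ u v : ZMod q, u ≠ v → u.val ≠ v.val := by
      intro u v huv h
      exact huv (ZMod.val_injective q h)
    have hsort_mem : ∀ u v : ZMod q, u ≠ v → F u ≠ F v → sortp u v ∈ D := by
      intro u v huv hFuv
      rw [hDdef]
      simp only [Finset.mem_filter, Finset.mem_univ, true_and]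
      simp only [hsort]
      have hval := hvalne u v huv
      by_cases hlt : u.val < v.val
      · rw [if_pos hlt]
        exact ⟨hlt, hdiff_ne u v hFuv⟩
      · rw [if_neg hlt]
        exact ⟨show v.val < u.val by omega, hdiff_ne v u (fun h => hFuv h.symm)⟩
    have hmem : ∀ c ∈ univ.erase a0, φ c ∈ D := by
      intro c hc
      have hca0 : c ≠ a0 := (Finset.mem_erase.mp hc).1
      simp only [hφ]
      by_cases hFc : F c ≠ F a0
      · rw [if_pos hFc]
        exact hsort_mem c a0 hca0 hFc
      · rw [if_neg hFc]
        push_neg at hFc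
        have hcb0 : c ≠ b0 := by
          intro h
          rw [h] at hFc
          exact hFne hFc.symm
        have : F c ≠ F b0 := by
          rw [hFc]
          exact hFne
        exact hsort_mem c b0 hcb0 this
    -- recovery map
    set ρ : ZMod q × ZMod q → ZMod q := fun p =>
      if p.1 ≠ a0 ∧ p.1 ≠ b0 then p.1 else if p.2 ≠ a0 ∧ p.2 ≠ b0 then p.2 else b0 with hρ
    have ha0b0 : a0 ≠ b0 := by
      intro h
      rw [h] at hFne
      exact hFne rfl
    have hsort_comp : ∀ (c t : ZMod q), c ≠ a0 → c ≠ b0 → (t = a0 ∨ t = b0) →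
        ρ (sortp c t) = c := by
      intro c t hc1 hc2 ht
      simp only [hsort, hρ]
      have hta : ¬ (t ≠ a0 ∧ t ≠ b0) := by
        rcases ht with h | h <;> simp [h]
      by_cases hlt : c.val < t.val
      · rw [if_pos hlt]
        rw [if_pos ⟨hc1, hc2⟩]
      · rw [if_neg hlt]
        rw [if_neg hta, if_pos ⟨hc1, hc2⟩]
    have hrec : ∀ c ∈ univ.erase a0, ρ (φ c) = c := by
      intro c hc
      have hca0 : c ≠ a0 := (Finset.mem_erase.mp hc).1
      simp only [hφ]
      by_cases hcb0 : c = b0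
      · rw [if_pos (by rw [hcb0]; exact fun h => hFne h.symm)]
        simp only [hsort, hρ]
        by_cases hlt : c.val < a0.val
        · rw [if_pos hlt]
          rw [if_neg (by simp [hcb0]), if_neg (by simp)]
          exact hcb0.symm
        · rw [if_neg hlt]
          rw [if_neg (by simp), if_neg (by simp [hcb0])]
          exact hcb0.symm
      · by_cases hFc : F c ≠ F a0
        · rw [if_pos hFc]
          exact hsort_comp c a0 hca0 hcb0 (Or.inl rfl)
        · rw [if_neg hFc]
          exact hsort_comp c b0 hca0 hcb0 (Or.inr rfl)
    have hinj : Set.InjOn φ (univ.erase a0 : Finset (ZMod q)) := by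
      intro c1 h1 c2 h2 heq
      have := hrec c1 h1
      rw [heq, hrec c2 h2] at this
      exact this.symm
    have hcard := Finset.card_le_card_of_injOn φ hmem hinj
    rw [Finset.card_erase_of_mem (Finset.mem_univ a0), Finset.card_univ, ZMod.card] at hcard
    exact hcard
  -- rewrite double sum as a sum over ordered pairs
  have hdouble : (∑ a : ZMod q, ∑ b ∈ univ.filter (fun b : ZMod q => a.val < b.val),
      suppCard q n (restrictDiff f i a b))
      = ∑ p ∈ univ.filter (fun p : ZMod q × ZMod q => p.1.val < p.2.val),
          suppCard q n (restrictDiff f i p.1 p.2) := by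
    calc (∑ a : ZMod q, ∑ b ∈ univ.filter (fun b : ZMod q => a.val < b.val),
        suppCard q n (restrictDiff f i a b))
        = ∑ a : ZMod q, ∑ b : ZMod q,
            if a.val < b.val then suppCard q n (restrictDiff f i a b) else 0 := by
          apply Finset.sum_congr rfl
          intro a _
          rw [Finset.sum_filter]
      _ = ∑ p : ZMod q × ZMod q,
            if p.1.val < p.2.val then suppCard q n (restrictDiff f i p.1 p.2) else 0 := by
          rw [Fintype.sum_prod_type]
      _ = _ := by rw [Finset.sum_filter]
  rw [hdouble]
  have hsub : D ⊆ univ.filter (fun p : ZMod q × ZMod q => p.1.val < p.2.val) := by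
    intro p hp
    rw [hDdef] at hp
    have := Finset.mem_filter.mp hp
    exact Finset.mem_filter.mpr ⟨this.1, this.2.1⟩
  have hmono : (∑ p ∈ D, suppCard q n (restrictDiff f i p.1 p.2))
      ≤ ∑ p ∈ univ.filter (fun p : ZMod q × ZMod q => p.1.val < p.2.val),
          suppCard q n (restrictDiff f i p.1 p.2) :=
    Finset.sum_le_sum_of_subset hsub
  have hDT : D.card * T ≤ ∑ p ∈ D, suppCard q n (restrictDiff f i p.1 p.2) := by
    have := Finset.card_nsmul_le_sum D (fun p => suppCard q n (restrictDiff f i p.1 p.2)) T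
      (fun p hp => hperpair p.1 p.2 (by rw [hDdef] at hp; exact (Finset.mem_filter.mp hp).2.2))
    rwa [smul_eq_mul] at this
  have hfinal : 2 ^ (d' - 1) * (q - 1) ^ d' * q ^ (n + 2 - d' - d) = (q - 1) * T := by
    have h1 : (q-1)^d' = (q-1)^(d'-1) * (q-1) := by
      rw [← pow_succ]
      congr 1
      omega
    rw [h1, hTdef]
    ring
  have hq1T : (q - 1) * T ≤ D.card * T := Nat.mul_le_mul_right T hcardD
  omega
end
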